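/- If $A$ is a $\xi$-regular $n \times n$ matrix, then after elementary row reduction using the unit $1 - A_{11}$, the resulting $(n-1) \times (n-1)$ matrix $A'$ (with $I - A' $ the lower-right block) is again $\xi$-regular with the same constant $K$. Consequently, by induction, the class of $I - A$ in $\overline{K}_1^G(\widehat{\mathbb{Z}G}_\xi)$ lies in the subgroup $\overline{W}$ generated by units $1-a$ with $\|a\| < 1$. -/

import Mathlib

noncomputable section
open scoped Classical

/-- Novikov finiteness condition (coefficients in `ℤ`). -/
def NovCond {G : Type*} [Group G] (ξ : G → ℝ) (l : G → ℤ) : Prop :=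
  ∀ r : ℝ, {g : G | l g ≠ 0 ∧ r ≤ ξ g}.Finite

/-- Convolution product on the Novikov ring `ẐG_ξ`. -/
def conv {G : Type*} [Group G] (l₁ l₂ : G → ℤ) : G → ℤ :=
  fun g => ∑ᶠ h : G, l₁ h * l₂ (h⁻¹ * g)

/-- The norm on the Novikov ring. -/
def novNorm {G : Type*} [Group G] (ξ : G → ℝ) (l : G → ℤ) : ℝ :=
  sInf {t : ℝ | 0 < t ∧ ∀ g : G, l g ≠ 0 → ξ g ≤ Real.log t}

/-- The multiplicative unit `1 ∈ ẐG_ξ`. -/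
def oneF {G : Type*} [Group G] : G → ℤ := fun g => if g = 1 then 1 else 0

/-- Convolution powers `a^n`. -/
def convPow {G : Type*} [Group G] (a : G → ℤ) : ℕ → (G → ℤ)
  | 0 => oneF
  | n + 1 => conv a (convPow a n)

/-- Matrix multiplication over the Novikov ring. -/
def matMulC {G : Type*} [Group G] {n : ℕ}
    (A B : Fin n → Fin n → (G → ℤ)) : Fin n → Fin n → (G → ℤ) :=
  fun i j => ∑ l : Fin n, conv (A i l) (B l j)

/-- The identity matrix over the Novikov ring. -/
def matId {G : Type*} [Group G] {n : ℕ} : Fin n → Fin n → (G → ℤ) :=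
  fun i j => if i = j then oneF else 0

/-- An elementary (transvection) matrix over the Novikov ring. -/
def IsElemM {G : Type*} [Group G] (ξ : G → ℝ) {n : ℕ}
    (E : Fin n → Fin n → (G → ℤ)) : Prop :=
  ∃ i j : Fin n, i ≠ j ∧ ∃ c : G → ℤ, NovCond ξ c ∧
    E = fun k l => if k = l then oneF else if k = i ∧ l = j then c else 0

/-- A diagonal matrix whose entries are trivial units `± g`. -/
def IsTrivDiag {G : Type*} [Group G] (ξ : G → ℝ) {n : ℕ}
    (D : Fin n → Fin n → (G → ℤ)) : Prop :=
  ∃ γ : Fin n → G, ∃ e : Fin n → ℤ, (∀ i, e i = 1 ∨ e i = -1) ∧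
    D = fun k l => if k = l then (fun g => if g = γ k then e k else 0) else 0

/-- A diagonal matrix whose entries are units `1 - a` with `‖a‖ < 1`. -/
def IsWDiag {G : Type*} [Group G] (ξ : G → ℝ) {n : ℕ}
    (D : Fin n → Fin n → (G → ℤ)) : Prop :=
  ∃ a : Fin n → (G → ℤ), (∀ i, NovCond ξ (a i) ∧ novNorm ξ (a i) < 1) ∧
    D = fun k l => if k = l then oneF - a k else 0

section Basics

variable {G : Type*} [Group G] {ξ : G → ℝ}

/-- decay bound predicate -/
def DecayBy {G : Type*} [Group G] (ξ : G → ℝ) (l : G → ℤ) (M : ℝ) : Prop :=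
  ∀ g : G, l g ≠ 0 → ξ g ≤ M

lemma xi_one (hξ : ∀ a b : G, ξ (a * b) = ξ a + ξ b) : ξ 1 = 0 := by
  have := hξ 1 1; simp at this; linarith

lemma xi_inv (hξ : ∀ a b : G, ξ (a * b) = ξ a + ξ b) (g : G) : ξ g⁻¹ = -ξ g := by
  have := hξ g⁻¹ g; simp [xi_one hξ] at this; linarith

lemma xi_split (hξ : ∀ a b : G, ξ (a * b) = ξ a + ξ b) (h g : G) :
    ξ (h⁻¹ * g) = ξ g - ξ h := by
  rw [hξ, xi_inv hξ]; ring

lemma NovCond.zero : NovCond ξ (0 : G → ℤ) := by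
  intro r
  convert Set.finite_empty using 2
  ext g; simp

lemma novCond_oneF : NovCond ξ (oneF : G → ℤ) := by
  intro r
  apply Set.Finite.subset (Set.finite_singleton (1 : G))
  intro g hg
  rcases hg with ⟨h1, _⟩
  simp only [Set.mem_singleton_iff]
  by_contra hne
  unfold oneF at h1
  rw [if_neg hne] at h1
  exact h1 rfl

lemma NovCond.add {a b : G → ℤ} (ha : NovCond ξ a) (hb : NovCond ξ b) :
    NovCond ξ (a + b) := by
  intro r
  apply Set.Finite.subset ((ha r).union (hb r))
  intro g hg
  rcases hg with ⟨h1, h2⟩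
  by_contra hc
  simp only [Set.mem_union, Set.mem_setOf_eq, not_or] at hc
  push_neg at hc
  have hag : a g = 0 := by by_contra h; exact absurd h2 (by simpa using (hc.1 h))
  have hbg : b g = 0 := by by_contra h; exact absurd h2 (by simpa using (hc.2 h))
  simp [Pi.add_apply, hag, hbg] at h1

lemma NovCond.neg {a : G → ℤ} (ha : NovCond ξ a) : NovCond ξ (-a) := by
  intro r
  apply Set.Finite.subset (ha r)
  intro g hg
  rcases hg with ⟨h1, h2⟩
  exact ⟨by simpa using h1, h2⟩

lemma NovCond.sub {a b : G → ℤ} (ha : NovCond ξ a) (hb : NovCond ξ b) :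
    NovCond ξ (a - b) := by
  have := ha.add hb.neg
  simpa [sub_eq_add_neg] using this

lemma NovCond.bound {l : G → ℤ} (hl : NovCond ξ l) :
    ∃ M : ℝ, DecayBy ξ l M := by
  classical
  set F := (hl 0).toFinset with hF
  refine ⟨(insert (0:ℝ) (F.image ξ)).max' ⟨0, Finset.mem_insert_self _ _⟩, ?_⟩
  intro g hg
  rcases le_or_gt (ξ g) 0 with h | h
  · exact h.trans (Finset.le_max' _ 0 (Finset.mem_insert_self _ _))
  · apply Finset.le_max'
    apply Finset.mem_insert_of_mem
    apply Finset.mem_image_of_mem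
    rw [hF, Set.Finite.mem_toFinset]
    exact ⟨hg, h.le⟩

lemma support_conv_term_finite (hξ : ∀ a b : G, ξ (a * b) = ξ a + ξ b)
    {a b : G → ℤ} (ha : NovCond ξ a) {Mb : ℝ} (hb : DecayBy ξ b Mb) (g : G) :
    (Function.support fun h => a h * b (h⁻¹ * g)).Finite := by
  apply Set.Finite.subset (ha (ξ g - Mb))
  intro h hh
  simp only [Function.mem_support] at hh
  have hah : a h ≠ 0 := fun hz => hh (by simp [hz])
  have hbh : b (h⁻¹ * g) ≠ 0 := fun hz => hh (by simp [hz])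
  have := hb _ hbh
  rw [xi_split hξ] at this
  exact ⟨hah, by linarith⟩

lemma conv_ne_zero {a b : G → ℤ} {g : G} (h : conv a b g ≠ 0) :
    ∃ h' : G, a h' ≠ 0 ∧ b (h'⁻¹ * g) ≠ 0 := by
  by_contra hc
  push_neg at hc
  apply h
  unfold conv
  have : (fun h' : G => a h' * b (h'⁻¹ * g)) = fun _ => 0 := by
    funext h'
    rcases eq_or_ne (a h') 0 with hz | hz
    · simp [hz]
    · simp [hc h' hz]
  rw [this, finsum_zero]

lemma DecayBy.conv (hξ : ∀ a b : G, ξ (a * b) = ξ a + ξ b)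
    {a b : G → ℤ} {Ma Mb : ℝ} (ha : DecayBy ξ a Ma) (hb : DecayBy ξ b Mb) :
    DecayBy ξ (conv a b) (Ma + Mb) := by
  intro g hg
  obtain ⟨h, hah, hbh⟩ := conv_ne_zero hg
  have h1 := ha _ hah
  have h2 := hb _ hbh
  rw [xi_split hξ] at h2
  linarith

lemma NovCond.conv (hξ : ∀ a b : G, ξ (a * b) = ξ a + ξ b)
    {a b : G → ℤ} (ha : NovCond ξ a) (hb : NovCond ξ b) :
    NovCond ξ (conv a b) := by
  obtain ⟨Ma, hMa⟩ := ha.bound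
  obtain ⟨Mb, hMb⟩ := hb.bound
  intro r
  apply Set.Finite.subset (((ha (r - Mb)).prod (hb (r - Ma))).image
    (fun p : G × G => p.1 * p.2))
  intro g hg
  rcases hg with ⟨h1, h2⟩
  obtain ⟨h, hah, hbh⟩ := conv_ne_zero h1
  have e1 := hMa _ hah
  have e2 := hMb _ hbh
  have e3 : ξ (h⁻¹ * g) = ξ g - ξ h := xi_split hξ h g
  refine ⟨⟨h, h⁻¹ * g⟩, ⟨⟨hah, by linarith⟩, ⟨hbh, by linarith⟩⟩, by simp⟩

lemma novNormSet_nonempty {l : G → ℤ} (hl : NovCond ξ l) :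
    {t : ℝ | 0 < t ∧ ∀ g : G, l g ≠ 0 → ξ g ≤ Real.log t}.Nonempty := by
  obtain ⟨M, hM⟩ := hl.bound
  exact ⟨Real.exp M, Real.exp_pos M, fun g hg => by
    rw [Real.log_exp]; exact hM g hg⟩

lemma novNormSet_bddBelow (l : G → ℤ) :
    BddBelow {t : ℝ | 0 < t ∧ ∀ g : G, l g ≠ 0 → ξ g ≤ Real.log t} :=
  ⟨0, fun t ht => ht.1.le⟩

lemma novNorm_nonneg {l : G → ℤ} (hl : NovCond ξ l) : 0 ≤ novNorm ξ l :=
  le_csInf (novNormSet_nonempty hl) (fun t ht => ht.1.le)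

lemma exp_le_novNorm {l : G → ℤ} (hl : NovCond ξ l) {g : G} (hg : l g ≠ 0) :
    Real.exp (ξ g) ≤ novNorm ξ l := by
  apply le_csInf (novNormSet_nonempty hl)
  intro t ht
  calc Real.exp (ξ g) ≤ Real.exp (Real.log t) := Real.exp_le_exp.2 (ht.2 g hg)
  _ = t := Real.exp_log ht.1

lemma novNorm_le_exp {l : G → ℤ} {M : ℝ} (hM : DecayBy ξ l M) :
    novNorm ξ l ≤ Real.exp M := by
  apply csInf_le (novNormSet_bddBelow l)
  exact ⟨Real.exp_pos M, fun g hg => by rw [Real.log_exp]; exact hM g hg⟩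

lemma DecayBy.of_novNorm_le {l : G → ℤ} (hl : NovCond ξ l) {t : ℝ}
    (ht : 0 < t) (h : novNorm ξ l ≤ t) : DecayBy ξ l (Real.log t) := by
  intro g hg
  have := (exp_le_novNorm hl hg).trans h
  rwa [Real.le_log_iff_exp_le ht]

lemma novNorm_zero : novNorm ξ (0 : G → ℤ) = 0 := by
  unfold novNorm
  have : {t : ℝ | 0 < t ∧ ∀ g : G, (0 : G → ℤ) g ≠ 0 → ξ g ≤ Real.log t}
      = Set.Ioi 0 := by ext t; simp
  rw [this]
  exact csInf_Ioi

end Basics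

section ConvRing

variable {G : Type*} [Group G] {ξ : G → ℝ}

lemma finsum_swap_of_cover {α β : Type*} (F : α → β → ℤ) (H : Finset α) (Kf : Finset β)
    (hcov : ∀ a b, F a b ≠ 0 → a ∈ H ∧ b ∈ Kf) :
    ∑ᶠ a, ∑ᶠ b, F a b = ∑ᶠ b, ∑ᶠ a, F a b := by
  have inner1 : ∀ a, ∑ᶠ b, F a b = ∑ b ∈ Kf, F a b := fun a =>
    finsum_eq_finset_sum_of_support_subset _ (fun b hb => (hcov a b hb).2)
  have inner2 : ∀ b, ∑ᶠ a, F a b = ∑ a ∈ H, F a b := fun b =>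
    finsum_eq_finset_sum_of_support_subset _ (fun a ha => (hcov a b ha).1)
  have hs1 : Function.support (fun a => ∑ b ∈ Kf, F a b) ⊆ ↑H := by
    intro a ha
    simp only [Function.mem_support] at ha
    by_contra hc
    exact ha (Finset.sum_eq_zero (fun b _ => by
      by_contra hb; exact hc ((hcov a b hb).1)))
  have hs2 : Function.support (fun b => ∑ a ∈ H, F a b) ⊆ ↑Kf := by
    intro b hb
    simp only [Function.mem_support] at hb
    by_contra hc
    exact hb (Finset.sum_eq_zero (fun a _ => by
      by_contra ha; exact hc ((hcov a b ha).2)))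
  calc ∑ᶠ a, ∑ᶠ b, F a b = ∑ᶠ a, ∑ b ∈ Kf, F a b := by simp only [inner1]
  _ = ∑ a ∈ H, ∑ b ∈ Kf, F a b := finsum_eq_finset_sum_of_support_subset _ hs1
  _ = ∑ b ∈ Kf, ∑ a ∈ H, F a b := Finset.sum_comm
  _ = ∑ᶠ b, ∑ a ∈ H, F a b := (finsum_eq_finset_sum_of_support_subset _ hs2).symm
  _ = ∑ᶠ b, ∑ᶠ a, F a b := by simp only [inner2]

lemma conv_zero_left (b : G → ℤ) : conv (0 : G → ℤ) b = 0 := by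
  funext g; simp [conv]

lemma conv_zero_right (a : G → ℤ) : conv a (0 : G → ℤ) = 0 := by
  funext g; simp [conv]

lemma conv_oneF_left (b : G → ℤ) : conv oneF b = b := by
  funext g
  unfold conv oneF
  rw [finsum_eq_single _ (1 : G) (fun x hx => by simp [hx])]
  simp

lemma conv_oneF_right (a : G → ℤ) : conv a oneF = a := by
  funext g
  unfold conv oneF
  rw [finsum_eq_single _ g (fun x hx => by simp [inv_mul_eq_one, hx])]
  simp

lemma conv_neg_left (a b : G → ℤ) : conv (-a) b = -(conv a b) := by
  funext g
  simp only [conv, Pi.neg_apply, neg_mul]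
  exact finsum_neg_distrib _

lemma conv_neg_right (a b : G → ℤ) : conv a (-b) = -(conv a b) := by
  funext g
  simp only [conv, Pi.neg_apply, mul_neg]
  exact finsum_neg_distrib _

lemma conv_add_left (hξ : ∀ a b : G, ξ (a * b) = ξ a + ξ b) {a b c : G → ℤ}
    (ha : NovCond ξ a) (hb : NovCond ξ b) (hc : NovCond ξ c) :
    conv (a + b) c = conv a c + conv b c := by
  obtain ⟨Mc, hMc⟩ := hc.bound
  funext g
  simp only [conv, Pi.add_apply, add_mul]
  exact finsum_add_distrib (support_conv_term_finite hξ ha hMc g)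
    (support_conv_term_finite hξ hb hMc g)

lemma conv_add_right (hξ : ∀ a b : G, ξ (a * b) = ξ a + ξ b) {a b c : G → ℤ}
    (ha : NovCond ξ a) (hb : NovCond ξ b) (hc : NovCond ξ c) :
    conv a (b + c) = conv a b + conv a c := by
  obtain ⟨Mb, hMb⟩ := hb.bound
  obtain ⟨Mc, hMc⟩ := hc.bound
  funext g
  simp only [conv, Pi.add_apply, mul_add]
  exact finsum_add_distrib (support_conv_term_finite hξ ha hMb g)
    (support_conv_term_finite hξ ha hMc g)

lemma conv_sub_left (hξ : ∀ a b : G, ξ (a * b) = ξ a + ξ b) {a b c : G → ℤ}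
    (ha : NovCond ξ a) (hb : NovCond ξ b) (hc : NovCond ξ c) :
    conv (a - b) c = conv a c - conv b c := by
  rw [sub_eq_add_neg, conv_add_left hξ ha hb.neg hc, conv_neg_left, sub_eq_add_neg]

lemma conv_sub_right (hξ : ∀ a b : G, ξ (a * b) = ξ a + ξ b) {a b c : G → ℤ}
    (ha : NovCond ξ a) (hb : NovCond ξ b) (hc : NovCond ξ c) :
    conv a (b - c) = conv a b - conv a c := by
  rw [sub_eq_add_neg, conv_add_right hξ ha hb hc.neg, conv_neg_right, sub_eq_add_neg]

lemma conv_assoc (hξ : ∀ a b : G, ξ (a * b) = ξ a + ξ b) {a b c : G → ℤ}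
    (ha : NovCond ξ a) (hb : NovCond ξ b) (hc : NovCond ξ c) :
    conv (conv a b) c = conv a (conv b c) := by
  obtain ⟨Ma, hMa⟩ := ha.bound
  obtain ⟨Mb, hMb⟩ := hb.bound
  obtain ⟨Mc, hMc⟩ := hc.bound
  funext g
  have L1 : conv (conv a b) c g = ∑ᶠ h, ∑ᶠ k, a k * b (k⁻¹ * h) * c (h⁻¹ * g) := by
    unfold conv
    congr 1; funext h
    exact finsum_mul' _ _ (support_conv_term_finite hξ ha hMb h)
  have R1 : conv a (conv b c) g = ∑ᶠ k, ∑ᶠ h, a k * b (k⁻¹ * h) * c (h⁻¹ * g) := by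
    unfold conv
    congr 1; funext k
    rw [mul_finsum' _ _ (support_conv_term_finite hξ hb hMc (k⁻¹ * g))]
    rw [← finsum_comp_equiv (Equiv.mulLeft k⁻¹)
      (f := fun m => a k * (b m * c (m⁻¹ * (k⁻¹ * g))))]
    congr 1; funext h
    have h1 : ((Equiv.mulLeft k⁻¹) h : G) = k⁻¹ * h := rfl
    rw [h1]
    have h2 : (k⁻¹ * h)⁻¹ * (k⁻¹ * g) = h⁻¹ * g := by group
    rw [h2, mul_assoc]
  rw [L1, R1]
  set Kset : Finset G := (ha (ξ g - Mb - Mc)).toFinset with hKset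
  set Hset : Finset G := (((ha (ξ g - Mb - Mc)).prod (hb (ξ g - Ma - Mc))).image
    (fun p : G × G => p.1 * p.2)).toFinset with hHset
  apply finsum_swap_of_cover _ Hset Kset
  intro h k hF
  have hak : a k ≠ 0 := fun hz => hF (by simp [hz])
  have hbk : b (k⁻¹ * h) ≠ 0 := fun hz => hF (by simp [hz])
  have hch : c (h⁻¹ * g) ≠ 0 := fun hz => hF (by simp [hz])
  have e1 := hMa _ hak
  have e2 := hMb _ hbk
  have e3 := hMc _ hch
  have s1 : ξ (k⁻¹ * h) = ξ h - ξ k := xi_split hξ k h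
  have s2 : ξ (h⁻¹ * g) = ξ g - ξ h := xi_split hξ h g
  constructor
  · rw [hHset, Set.Finite.mem_toFinset]
    refine ⟨⟨k, k⁻¹ * h⟩, ⟨⟨hak, by linarith⟩, ⟨hbk, by linarith⟩⟩, by simp⟩
  · rw [hKset, Set.Finite.mem_toFinset]
    exact ⟨hak, by linarith⟩

lemma novCond_finsetSum {α : Type*} (s : Finset α) (f : α → (G → ℤ))
    (hf : ∀ i ∈ s, NovCond ξ (f i)) : NovCond ξ (∑ i ∈ s, f i) := by
  classical
  induction s using Finset.induction_on with
  | empty => simpa using (NovCond.zero : NovCond ξ (0 : G → ℤ))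
  | insert _ _ hnotmem ih =>
    rw [Finset.sum_insert hnotmem]
    exact (hf _ (Finset.mem_insert_self _ _)).add
      (ih (fun i hi => hf i (Finset.mem_insert_of_mem hi)))

lemma conv_finsetSum_left (hξ : ∀ a b : G, ξ (a * b) = ξ a + ξ b)
    {α : Type*} (s : Finset α) (f : α → (G → ℤ)) (c : G → ℤ)
    (hf : ∀ i ∈ s, NovCond ξ (f i)) (hc : NovCond ξ c) :
    conv (∑ i ∈ s, f i) c = ∑ i ∈ s, conv (f i) c := by
  classical
  induction s using Finset.induction_on with
  | empty => simp [conv_zero_left]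
  | insert _ _ hnotmem ih =>
    rw [Finset.sum_insert hnotmem, Finset.sum_insert hnotmem,
      conv_add_left hξ (hf _ (Finset.mem_insert_self _ _))
        (novCond_finsetSum _ _ (fun i hi => hf i (Finset.mem_insert_of_mem hi))) hc,
      ih (fun i hi => hf i (Finset.mem_insert_of_mem hi))]

lemma conv_finsetSum_right (hξ : ∀ a b : G, ξ (a * b) = ξ a + ξ b)
    {α : Type*} (s : Finset α) (a : G → ℤ) (f : α → (G → ℤ))
    (ha : NovCond ξ a) (hf : ∀ i ∈ s, NovCond ξ (f i)) :
    conv a (∑ i ∈ s, f i) = ∑ i ∈ s, conv a (f i) := by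
  classical
  induction s using Finset.induction_on with
  | empty => simp [conv_zero_right]
  | insert _ _ hnotmem ih =>
    rw [Finset.sum_insert hnotmem, Finset.sum_insert hnotmem,
      conv_add_right hξ ha (hf _ (Finset.mem_insert_self _ _))
        (novCond_finsetSum _ _ (fun i hi => hf i (Finset.mem_insert_of_mem hi))),
      ih (fun i hi => hf i (Finset.mem_insert_of_mem hi))]

end ConvRing

section Geom

variable {G : Type*} [Group G] {ξ : G → ℝ}

/-- geometric series ∑ aᵏ -/
def Sgeom {G : Type*} [Group G] (a : G → ℤ) : G → ℤ := fun g => ∑ᶠ k : ℕ, convPow a k g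

lemma novCond_convPow (hξ : ∀ a b : G, ξ (a * b) = ξ a + ξ b) {a : G → ℤ}
    (ha : NovCond ξ a) : ∀ k, NovCond ξ (convPow a k)
  | 0 => novCond_oneF
  | (k+1) => ha.conv hξ (novCond_convPow hξ ha k)

lemma decayBy_oneF (hξ : ∀ a b : G, ξ (a * b) = ξ a + ξ b) :
    DecayBy ξ (oneF : G → ℤ) 0 := by
  intro g hg
  rcases eq_or_ne g 1 with h | h
  · subst h
    rw [xi_one hξ]
  · exact absurd (by simp [oneF, h]) hg

lemma decay_convPow (hξ : ∀ a b : G, ξ (a * b) = ξ a + ξ b) {a : G → ℤ}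
    {K : ℝ} (hdec : DecayBy ξ a K) : ∀ k : ℕ, DecayBy ξ (convPow a k) (k * K)
  | 0 => by simpa [convPow] using (decayBy_oneF (ξ := ξ) hξ)
  | (k+1) => by
    have := hdec.conv hξ (decay_convPow hξ hdec k)
    have he : (((k:ℕ)+1:ℕ):ℝ) * K = K + (k:ℝ) * K := by push_cast; ring
    rw [he]
    exact this

lemma convPow_k_support_finite (hξ : ∀ a b : G, ξ (a * b) = ξ a + ξ b) {a : G → ℤ}
    {K : ℝ} (hdec : DecayBy ξ a K) (hK : K < 0) (g : G) :
    (Function.support fun k : ℕ => convPow a k g).Finite := by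
  apply Set.Finite.subset (Set.finite_Iio (Nat.floor (ξ g / K) + 1))
  intro k hk
  simp only [Function.mem_support] at hk
  have h1 : ξ g ≤ (k : ℝ) * K := decay_convPow hξ hdec k g hk
  have h2 : (k : ℝ) ≤ ξ g / K := by
    rw [le_div_iff_of_neg hK]
    linarith [mul_comm (k:ℝ) K]
  have := Nat.le_floor h2
  simp only [Set.mem_Iio]
  omega

lemma decay_Sgeom (hξ : ∀ a b : G, ξ (a * b) = ξ a + ξ b) {a : G → ℤ}
    {K : ℝ} (hdec : DecayBy ξ a K) (hK : K < 0) : DecayBy ξ (Sgeom a) 0 := by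
  intro g hg
  have : ∃ k, convPow a k g ≠ 0 := by
    by_contra hc
    push_neg at hc
    apply hg
    unfold Sgeom
    have : (fun k : ℕ => convPow a k g) = fun _ => 0 := funext hc
    rw [this, finsum_zero]
  obtain ⟨k, hk⟩ := this
  have h1 : ξ g ≤ (k : ℝ) * K := decay_convPow hξ hdec k g hk
  have h2 : (k : ℝ) * K ≤ 0 := mul_nonpos_of_nonneg_of_nonpos (Nat.cast_nonneg k) hK.le
  linarith

lemma novCond_Sgeom (hξ : ∀ a b : G, ξ (a * b) = ξ a + ξ b) {a : G → ℤ}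
    (ha : NovCond ξ a) {K : ℝ} (hdec : DecayBy ξ a K) (hK : K < 0) :
    NovCond ξ (Sgeom a) := by
  intro r
  set N := Nat.floor (r / K) + 1 with hN
  apply Set.Finite.subset ((Finset.range N).finite_toSet.biUnion
    (fun k _ => novCond_convPow hξ ha k r))
  intro g hg
  rcases hg with ⟨h1, h2⟩
  have : ∃ k, convPow a k g ≠ 0 := by
    by_contra hc
    push_neg at hc
    apply h1
    unfold Sgeom
    have : (fun k : ℕ => convPow a k g) = fun _ => 0 := funext hc
    rw [this, finsum_zero]
  obtain ⟨k, hk⟩ := this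
  have hb : ξ g ≤ (k : ℝ) * K := decay_convPow hξ hdec k g hk
  have h3 : (k : ℝ) ≤ r / K := by
    rw [le_div_iff_of_neg hK]
    have hmc : K * (k:ℝ) = (k:ℝ) * K := mul_comm _ _
    linarith
  have h4 := Nat.le_floor h3
  have hkN : k < N := by omega
  exact Set.mem_biUnion (by simpa using hkN) ⟨hk, h2⟩

lemma finsum_nat_shift (f : ℕ → ℤ) (hf : (Function.support f).Finite) :
    ∑ᶠ k : ℕ, f (k + 1) = (∑ᶠ k : ℕ, f k) - f 0 := by
  have huniv : (Set.univ : Set ℕ) = {0} ∪ Set.range Nat.succ := by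
    ext k
    simp only [Set.mem_univ, true_iff, Set.mem_union, Set.mem_singleton_iff, Set.mem_range]
    cases k with
    | zero => exact Or.inl rfl
    | succ n => exact Or.inr ⟨n, rfl⟩
  have h1 : ∑ᶠ k : ℕ, f k = ∑ᶠ k ∈ (Set.univ : Set ℕ), f k := (finsum_mem_univ f).symm
  have hdisj : Disjoint ({0} : Set ℕ) (Set.range Nat.succ) := by
    rw [Set.disjoint_left]
    rintro x hx ⟨m, hm⟩
    simp at hx
    omega
  rw [h1, huniv, finsum_mem_union' hdisj (hf.inter_of_right _) (hf.inter_of_right _),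
    finsum_mem_singleton, finsum_mem_range Nat.succ_injective]
  simp only [Nat.succ_eq_add_one]
  ring

lemma conv_Sgeom_right (hξ : ∀ a b : G, ξ (a * b) = ξ a + ξ b) {a : G → ℤ}
    (ha : NovCond ξ a) {K : ℝ} (hdec : DecayBy ξ a K) (hK : K < 0) :
    conv a (Sgeom a) = Sgeom a - oneF := by
  funext g
  have step1 : conv a (Sgeom a) g = ∑ᶠ h, ∑ᶠ k, a h * convPow a k (h⁻¹ * g) := by
    unfold conv Sgeom
    congr 1; funext h
    exact mul_finsum' _ _ (convPow_k_support_finite hξ hdec hK (h⁻¹ * g))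
  set N := Nat.floor ((ξ g - K) / K) + 1 with hN
  have step2 : ∑ᶠ h, ∑ᶠ k, a h * convPow a k (h⁻¹ * g)
      = ∑ᶠ k, ∑ᶠ h, a h * convPow a k (h⁻¹ * g) := by
    apply finsum_swap_of_cover _ ((ha (ξ g)).toFinset) (Finset.range N)
    intro h k hF
    have hah : a h ≠ 0 := fun hz => hF (by simp [hz])
    have hpk : convPow a k (h⁻¹ * g) ≠ 0 := fun hz => hF (by simp [hz])
    have e1 := hdec _ hah
    have e2 : ξ (h⁻¹ * g) ≤ (k:ℝ) * K := decay_convPow hξ hdec k _ hpk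
    have e2' : (k:ℝ) * K ≤ 0 := mul_nonpos_of_nonneg_of_nonpos (Nat.cast_nonneg k) hK.le
    have s1 : ξ (h⁻¹ * g) = ξ g - ξ h := xi_split hξ h g
    constructor
    · rw [Set.Finite.mem_toFinset]
      exact ⟨hah, by linarith⟩
    · have h3 : (k : ℝ) ≤ (ξ g - K) / K := by
        rw [le_div_iff_of_neg hK]
        have : K * (k:ℝ) = (k:ℝ) * K := mul_comm _ _
        linarith
      have h4 := Nat.le_floor h3
      simp only [Finset.mem_range]
      omega
  have step3 : ∀ k : ℕ, (∑ᶠ h, a h * convPow a k (h⁻¹ * g)) = convPow a (k+1) g :=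
    fun k => rfl
  have step4 : (∑ᶠ k : ℕ, convPow a (k + 1) g)
      = (∑ᶠ k : ℕ, convPow a k g) - convPow a 0 g :=
    finsum_nat_shift _ (convPow_k_support_finite hξ hdec hK g)
  rw [step1, step2]
  simp only [step3]
  rw [step4]
  rfl

lemma convPow_comm (hξ : ∀ a b : G, ξ (a * b) = ξ a + ξ b) {a : G → ℤ}
    (ha : NovCond ξ a) : ∀ k, conv (convPow a k) a = convPow a (k + 1)
  | 0 => by
    show conv oneF a = conv a (convPow a 0)
    rw [conv_oneF_left]
    show a = conv a oneF
    rw [conv_oneF_right]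
  | (k+1) => by
    show conv (conv a (convPow a k)) a = _
    rw [conv_assoc hξ ha (novCond_convPow hξ ha k) ha, convPow_comm hξ ha k]
    rfl

lemma conv_Sgeom_left (hξ : ∀ a b : G, ξ (a * b) = ξ a + ξ b) {a : G → ℤ}
    (ha : NovCond ξ a) {K : ℝ} (hdec : DecayBy ξ a K) (hK : K < 0) :
    conv (Sgeom a) a = Sgeom a - oneF := by
  funext g
  set N := Nat.floor ((ξ g - K) / K) + 1 with hN
  have step1 : conv (Sgeom a) a g = ∑ᶠ h, ∑ᶠ k, convPow a k h * a (h⁻¹ * g) := by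
    unfold conv Sgeom
    congr 1; funext h
    exact finsum_mul' _ _ (convPow_k_support_finite hξ hdec hK h)
  have step2 : ∑ᶠ h, ∑ᶠ k, convPow a k h * a (h⁻¹ * g)
      = ∑ᶠ k, ∑ᶠ h, convPow a k h * a (h⁻¹ * g) := by
    apply finsum_swap_of_cover _
      ((Finset.range N).biUnion (fun k => (novCond_convPow hξ ha k (ξ g - K)).toFinset))
      (Finset.range N)
    intro h k hF
    have hph : convPow a k h ≠ 0 := fun hz => hF (by simp [hz])
    have hah : a (h⁻¹ * g) ≠ 0 := fun hz => hF (by simp [hz])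
    have e1 : ξ (h⁻¹ * g) ≤ K := hdec _ hah
    have e2 : ξ h ≤ (k:ℝ) * K := decay_convPow hξ hdec k _ hph
    have s1 : ξ (h⁻¹ * g) = ξ g - ξ h := xi_split hξ h g
    have hklt : k < N := by
      have h3 : (k : ℝ) ≤ (ξ g - K) / K := by
        rw [le_div_iff_of_neg hK]
        have : K * (k:ℝ) = (k:ℝ) * K := mul_comm _ _
        linarith
      have h4 := Nat.le_floor h3
      omega
    constructor
    · simp only [Finset.mem_biUnion]
      refine ⟨k, Finset.mem_range.2 hklt, ?_⟩
      rw [Set.Finite.mem_toFinset]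
      exact ⟨hph, by linarith⟩
    · exact Finset.mem_range.2 hklt
  have step3 : ∀ k : ℕ, (∑ᶠ h, convPow a k h * a (h⁻¹ * g)) = convPow a (k+1) g :=
    fun k => congrFun (convPow_comm hξ ha k) g
  have step4 : (∑ᶠ k : ℕ, convPow a (k + 1) g)
      = (∑ᶠ k : ℕ, convPow a k g) - convPow a 0 g :=
    finsum_nat_shift _ (convPow_k_support_finite hξ hdec hK g)
  rw [step1, step2]
  simp only [step3]
  rw [step4]
  rfl

lemma conv_oneSub_Sgeom (hξ : ∀ a b : G, ξ (a * b) = ξ a + ξ b) {a : G → ℤ}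
    (ha : NovCond ξ a) {K : ℝ} (hdec : DecayBy ξ a K) (hK : K < 0) :
    conv (oneF - a) (Sgeom a) = oneF := by
  rw [conv_sub_left hξ novCond_oneF ha (novCond_Sgeom hξ ha hdec hK),
    conv_oneF_left, conv_Sgeom_right hξ ha hdec hK]
  abel

lemma conv_Sgeom_oneSub (hξ : ∀ a b : G, ξ (a * b) = ξ a + ξ b) {a : G → ℤ}
    (ha : NovCond ξ a) {K : ℝ} (hdec : DecayBy ξ a K) (hK : K < 0) :
    conv (Sgeom a) (oneF - a) = oneF := by
  rw [conv_sub_right hξ (novCond_Sgeom hξ ha hdec hK) novCond_oneF ha,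
    conv_oneF_right, conv_Sgeom_left hξ ha hdec hK]
  abel

end Geom

section Potential

variable {N : ℕ}

/-- weight of a path -/
def pathW (W : Fin (N+1) → Fin (N+1) → ℝ) : Fin (N+1) → List (Fin (N+1)) → ℝ
  | _, [] => 1
  | v, (x :: t) => W v x * pathW W x t

variable {W : Fin (N+1) → Fin (N+1) → ℝ}

lemma pathW_nonneg (hW : ∀ u v, 0 ≤ W u v) : ∀ (l : List (Fin (N+1))) v, 0 ≤ pathW W v l
  | [], _ => zero_le_one
  | (x :: t), v => mul_nonneg (hW v x) (pathW_nonneg hW t x)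

lemma pathW_append : ∀ (l₁ : List (Fin (N+1))) (v x : Fin (N+1)) (l₂ : List (Fin (N+1))),
    pathW W v (l₁ ++ x :: l₂) = pathW W v (l₁ ++ [x]) * pathW W x l₂
  | [], v, x, l₂ => by
    show W v x * pathW W x l₂ = (W v x * 1) * pathW W x l₂
    rw [mul_one]
  | (y :: t), v, x, l₂ => by
    show W v y * pathW W y (t ++ x :: l₂) = (W v y * pathW W y (t ++ [x])) * pathW W x l₂
    rw [pathW_append t y x l₂, mul_assoc]

lemma pathW_ofFn : ∀ (k : ℕ) (f : Fin (k+1) → Fin (N+1)),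
    pathW W (f 0) (List.ofFn (fun j : Fin k => f j.succ))
      = ∏ j : Fin k, W (f j.castSucc) (f j.succ)
  | 0, f => by simp [pathW]
  | (k+1), f => by
    have IH := pathW_ofFn k (fun j : Fin (k+1) => f j.succ)
    rw [List.ofFn_succ, Fin.prod_univ_succ]
    show W (f 0) (f (0 : Fin (k+1)).succ) * pathW W (f (0 : Fin (k+1)).succ) _ = _
    rw [Fin.castSucc_zero]
    try rw [IH]
    try congr 1
    all_goals
      first
      | rfl
      | (refine Finset.prod_congr rfl (fun j _ => ?_)
         first
         | rw [Fin.succ_castSucc]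
         | rw [← Fin.succ_castSucc]
         | rfl)

lemma snoc_succ_cyc {V : Type*} {m : ℕ} (i : Fin (m+1) → V) (j : Fin (m+1)) :
    (Fin.snoc i (i 0) : Fin (m+2) → V) j.succ = i (j + 1) := by
  rcases eq_or_ne j (Fin.last m) with h | h
  · subst h
    rw [Fin.succ_last, Fin.snoc_last, Fin.last_add_one]
  · have hlt : (j : ℕ) < m := by
      have h2 : (j : ℕ) ≠ m := fun hh => h (by ext; simp [hh])
      have := j.isLt
      omega
    have h1 : j.succ = Fin.castSucc ⟨j.val + 1, by omega⟩ := by ext; simp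
    rw [h1, Fin.snoc_castSucc]
    congr 1
    ext
    simp [Fin.val_add_one, h]

lemma pathW_cyc {m : ℕ} (i : Fin (m+1) → Fin (N+1)) :
    pathW W (i 0) (List.ofFn (fun j : Fin (m+1) => i (j + 1)))
      = ∏ j : Fin (m+1), W (i j) (i (j + 1)) := by
  have hf := pathW_ofFn (W := W) (m+1) (Fin.snoc i (i 0) : Fin (m+2) → Fin (N+1))
  have h0 : (Fin.snoc i (i 0) : Fin (m+2) → Fin (N+1)) 0 = i 0 := by
    have h : (0 : Fin (m+2)) = Fin.castSucc 0 := rfl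
    rw [h, Fin.snoc_castSucc]
  have hlist : (List.ofFn fun j : Fin (m+1) => (Fin.snoc i (i 0) : Fin (m+2) → Fin (N+1)) j.succ)
      = List.ofFn (fun j : Fin (m+1) => i (j + 1)) := by
    congr 1; funext j; exact snoc_succ_cyc i j
  rw [h0, hlist] at hf
  rw [hf]
  all_goals refine Finset.prod_congr rfl (fun j _ => ?_)
  all_goals rw [Fin.snoc_castSucc, snoc_succ_cyc]

lemma pathW_cycle_le
    (hcyc : ∀ (m : ℕ) (i : Fin (m+1) → Fin (N+1)), (∏ j, W (i j) (i (j + 1))) ≤ 1)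
    (x : Fin (N+1)) (q : List (Fin (N+1))) :
    pathW W x (q ++ [x]) ≤ 1 := by
  have hlen : ∀ j : Fin (q.length + 1), (j : ℕ) < (x :: q).length := by
    intro j; simpa using j.isLt
  set i : Fin (q.length+1) → Fin (N+1) := fun j => (x :: q)[(j:ℕ)]'(hlen j) with hi
  have hx : x = i 0 := rfl
  have hlist : q ++ [x] = List.ofFn (fun j : Fin (q.length+1) => i (j + 1)) := by
    apply List.ext_getElem
    · simp
    · intro t h1 h2
      rw [List.getElem_ofFn]
      have hmt : t < q.length + 1 := by simpa using h1
      rcases Nat.lt_or_ge t q.length with htm | htm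
      · have hval : ((⟨t, hmt⟩ + 1 : Fin (q.length+1)) : ℕ) = t + 1 := by
          rw [Fin.val_add_one, if_neg]
          · intro hh
            have := congrArg Fin.val hh
            simp [Fin.val_last] at this
            omega
        have hstep : i (⟨t, hmt⟩ + 1) = (x :: q)[t + 1]'(by simp; omega) := by
          simp only [hi, hval]
        rw [hstep, List.getElem_cons_succ, List.getElem_append_left htm]
      · have hteq : t = q.length := by omega
        have hval : ((⟨t, hmt⟩ + 1 : Fin (q.length+1)) : ℕ) = 0 := by
          rw [Fin.val_add_one, if_pos (by ext; simp [hteq])]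
        have hstep : i (⟨t, hmt⟩ + 1) = (x :: q)[0] := by
          simp only [hi, hval]
        rw [hstep, List.getElem_cons_zero]
        exact List.getElem_concat_length hteq h1
  rw [hlist]
  have hxx : pathW W x (List.ofFn fun j : Fin (q.length+1) => i (j + 1))
      = ∏ j, W (i j) (i (j + 1)) := pathW_cyc i
  rw [hxx]
  exact hcyc q.length i

end Potential

section Potential2

variable {N : ℕ} {W : Fin (N+1) → Fin (N+1) → ℝ}

lemma exists_dup_split {α : Type*} : ∀ (w : List α), ¬ w.Nodup →
    ∃ (p : List α) (x : α) (q r : List α), w = p ++ x :: q ++ x :: r := by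
  classical
  intro w
  induction w with
  | nil => intro h; exact absurd List.nodup_nil h
  | cons a t ih =>
    intro h
    by_cases ha : a ∈ t
    · obtain ⟨q, r, hqr⟩ := List.append_of_mem ha
      exact ⟨[], a, q, r, by simp [hqr]⟩
    · have hnt : ¬ t.Nodup := fun hn => h (List.nodup_cons.2 ⟨ha, hn⟩)
      obtain ⟨p, x, q, r, hw⟩ := ih hnt
      exact ⟨a :: p, x, q, r, by simp [hw]⟩

lemma getLast_concat_eq {α : Type*} {l₁ l₂ : List α} {v a : α}
    (h : l₁ ++ [v] = l₂ ++ [a]) : a = v := by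
  have h1 := congrArg List.getLast? h
  rw [List.getLast?_concat, List.getLast?_concat] at h1
  exact (Option.some_injective _ h1).symm

/-- crude uniform bound on weights of paths, via removing cycles -/
lemma pathW_ending_le (hW : ∀ u v, 0 ≤ W u v)
    (hcyc : ∀ (m : ℕ) (i : Fin (m+1) → Fin (N+1)), (∏ j, W (i j) (i (j + 1))) ≤ 1)
    {B : ℝ} (hB1 : 1 ≤ B) (hWB : ∀ u v, W u v ≤ B) :
    ∀ (n : ℕ) (l : List (Fin (N+1))) (u v : Fin (N+1)), l.length ≤ n →
      pathW W u (l ++ [v]) ≤ B ^ (N + 2) := by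
  have hB0 : (0:ℝ) ≤ B := zero_le_one.trans hB1
  have hBp : (1:ℝ) ≤ B ^ (N+2) := by first | exact one_le_pow_of_one_le' hB1 (N+2) | exact one_le_pow₀ hB1 | exact one_le_pow_of_le hB1 | positivity
  have hpow : ∀ (l : List (Fin (N+1))) (v : Fin (N+1)), pathW W v l ≤ B ^ l.length := by
    intro l
    induction l with
    | nil => intro v; simp [pathW]
    | cons x t iht =>
      intro v
      show W v x * pathW W x t ≤ B ^ (x :: t).length
      calc W v x * pathW W x t ≤ B * B ^ t.length :=
        mul_le_mul (hWB v x) (iht x) (pathW_nonneg hW t x) hB0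
      _ = B ^ (x :: t).length := by rw [List.length_cons]; ring
  intro n
  induction n using Nat.strong_induction_on with
  | _ n IH =>
    intro l u v hl
    by_cases hlen : l.length + 1 ≤ N + 2
    · calc pathW W u (l ++ [v]) ≤ B ^ (l ++ [v]).length := hpow _ _
      _ ≤ B ^ (N+2) := pow_le_pow_right₀ hB1 (by simpa using hlen)
    · have hnodup : ¬ (u :: (l ++ [v])).Nodup := by
        intro hnd
        have := hnd.length_le_card
        simp [Fintype.card_fin] at this
        omega
      obtain ⟨p, x, q, r, hsplit⟩ := exists_dup_split _ hnodup
      rcases p with _ | ⟨u', p'⟩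
      · have hux : u = x := by
          have := congrArg (fun w => w.head?) hsplit
          simpa using this
        have hlv : l ++ [v] = q ++ x :: r := by
          have := congrArg List.tail hsplit
          simpa using this
        rcases List.eq_nil_or_concat r with hr | ⟨r', a, hr⟩
        all_goals try rw [List.concat_eq_append] at hr
        · have hcyc1 : pathW W u (l ++ [v]) ≤ 1 := by
            rw [hlv, hr, hux]
            exact pathW_cycle_le hcyc x q
          exact hcyc1.trans hBp
        · have hav : a = v := getLast_concat_eq (l₁ := l) (l₂ := q ++ x :: r')
            (by rw [hlv, hr]; simp)
          have hkey : pathW W u (l ++ [v])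
              = pathW W x (q ++ [x]) * pathW W x (r' ++ [v]) := by
            rw [hlv, hr, hux, hav, pathW_append q x x (r' ++ [v])]
          have hlenr : r'.length < n := by
            have hL := congrArg List.length hlv
            rw [hr] at hL
            simp at hL
            omega
          rw [hkey]
          calc pathW W x (q ++ [x]) * pathW W x (r' ++ [v])
              ≤ 1 * (B ^ (N+2)) := mul_le_mul (pathW_cycle_le hcyc x q)
                (IH r'.length hlenr r' x v le_rfl) (pathW_nonneg hW _ _) zero_le_one
          _ = B ^ (N+2) := one_mul _
      · have hlv : l ++ [v] = p' ++ x :: (q ++ x :: r) := by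
          have := congrArg List.tail hsplit
          simpa using this
        have key : pathW W u (l ++ [v]) ≤ pathW W u (p' ++ x :: r) := by
          rw [hlv, pathW_append p' u x (q ++ x :: r), pathW_append q x x r]
          calc pathW W u (p' ++ [x]) * (pathW W x (q ++ [x]) * pathW W x r)
              = (pathW W u (p' ++ [x]) * pathW W x (q ++ [x])) * pathW W x r := by ring
          _ ≤ pathW W u (p' ++ [x]) * pathW W x r := mul_le_mul_of_nonneg_right
              (mul_le_of_le_one_right (pathW_nonneg hW _ _) (pathW_cycle_le hcyc x q))
              (pathW_nonneg hW _ _)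
          _ = pathW W u (p' ++ x :: r) := (pathW_append p' u x r).symm
        rcases List.eq_nil_or_concat r with hr | ⟨r', a, hr⟩
        all_goals try rw [List.concat_eq_append] at hr
        · have hxv : x = v := getLast_concat_eq (l₁ := l) (l₂ := p' ++ x :: q)
            (by rw [hlv, hr]; simp)
          have hlenp : p'.length < n := by
            have hL := congrArg List.length hlv
            rw [hr] at hL
            simp at hL
            omega
          have key2 : pathW W u (l ++ [v]) ≤ pathW W u (p' ++ [v]) := by
            rw [hr] at key
            rw [hxv] at key
            simpa using key
          exact key2.trans (IH p'.length hlenp p' u v le_rfl)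
        · have hav : a = v := getLast_concat_eq (l₁ := l) (l₂ := p' ++ x :: q ++ x :: r')
            (by rw [hlv, hr]; simp)
          have hlen2 : (p' ++ x :: r').length < n := by
            have hL := congrArg List.length hlv
            rw [hr] at hL
            simp at hL ⊢
            omega
          have key2 : pathW W u (l ++ [v]) ≤ pathW W u ((p' ++ x :: r') ++ [v]) := by
            refine key.trans (le_of_eq ?_)
            rw [hr, hav]
            simp
          exact key2.trans (IH _ hlen2 _ u v le_rfl)

lemma exists_potential (hW : ∀ u v, 0 ≤ W u v)
    (hcyc : ∀ (m : ℕ) (i : Fin (m+1) → Fin (N+1)), (∏ j, W (i j) (i (j + 1))) ≤ 1) :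
    ∃ C : Fin (N+1) → ℝ, (∀ v, 1 ≤ C v) ∧ ∀ u v, C u * W u v ≤ C v := by
  classical
  set B : ℝ := max 1 ((Finset.univ : Finset (Fin (N+1) × Fin (N+1))).sup'
    (by simp [Finset.univ_nonempty]) (fun p => W p.1 p.2)) with hB
  have hB1 : 1 ≤ B := le_max_left _ _
  have hWB : ∀ u v, W u v ≤ B := fun u v =>
    le_trans (Finset.le_sup' (fun p : Fin (N+1) × Fin (N+1) => W p.1 p.2)
      (Finset.mem_univ (u, v))) (le_max_right _ _)
  set Sv : Fin (N+1) → Set ℝ := fun v => {x : ℝ | ∃ u l, pathW W u (l ++ [v]) = x} with hSv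
  have hbdd : ∀ v, BddAbove (Sv v) := by
    intro v
    refine ⟨B ^ (N+2), ?_⟩
    rintro x ⟨u, l, rfl⟩
    exact pathW_ending_le hW hcyc hB1 hWB l.length l u v le_rfl
  have hne : ∀ v, (Sv v).Nonempty := fun v => ⟨pathW W v ([] ++ [v]), v, [], rfl⟩
  set C : Fin (N+1) → ℝ := fun v => max 1 (sSup (Sv v)) with hC
  refine ⟨C, fun v => le_max_left _ _, ?_⟩
  intro u v
  have hmem : ∀ x ∈ Sv u, x * W u v ∈ Sv v := by
    rintro x ⟨u', l, rfl⟩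
    refine ⟨u', l ++ [u], ?_⟩
    rw [show (l ++ [u]) ++ [v] = l ++ u :: [v] by simp, pathW_append]
    simp [pathW]
  have hCv0 : (0:ℝ) ≤ C v := zero_le_one.trans (le_max_left _ _)
  have h2 : 1 * W u v ≤ C v := by
    rw [one_mul]
    have hWuv : W u v ∈ Sv v := ⟨u, [], by simp [pathW]⟩
    exact le_trans (le_csSup (hbdd v) hWuv) (le_max_right _ _)
  have h1 : sSup (Sv u) * W u v ≤ C v := by
    rcases eq_or_lt_of_le (hW u v) with h0 | h0
    · rw [← h0, mul_zero]; exact hCv0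
    · rw [← le_div_iff₀ h0]
      apply csSup_le (hne u)
      intro x hx
      rw [le_div_iff₀ h0]
      exact le_trans (le_csSup (hbdd v) (hmem x hx)) (le_max_right _ _)
  calc C u * W u v = max (1 * W u v) (sSup (Sv u) * W u v) := by
        rw [hC]
        exact max_mul_of_nonneg _ _ (hW u v)
  _ ≤ C v := max_le h2 h1

end Potential2

section Part1

variable {G : Type*} [Group G] {ξ : G → ℝ}

/-- the reduced matrix -/
def Aprime {G : Type*} [Group G] {n' : ℕ} (A : Fin (n'+1) → Fin (n'+1) → (G → ℤ)) :
    Fin n' → Fin n' → (G → ℤ) :=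
  fun p q => A p.succ q.succ + conv (A p.succ 0) (conv (Sgeom (A 0 0)) (A 0 q.succ))

lemma exists_feasible (hξ : ∀ a b : G, ξ (a * b) = ξ a + ξ b)
    {n' : ℕ} (A : Fin (n'+1) → Fin (n'+1) → (G → ℤ))
    (hA : ∀ i j, NovCond ξ (A i j)) {K : ℝ}
    (hreg : ∀ m : ℕ, ∀ i : Fin (m+1) → Fin (n'+1),
      (∏ j : Fin (m+1), novNorm ξ (A (i j) (i (j+1)))) ≤ Real.exp (K * (m+1))) :
    ∃ C : Fin (n'+1) → ℝ, (∀ v, 1 ≤ C v) ∧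
      ∀ u v, DecayBy ξ (A u v) (K + Real.log (C v) - Real.log (C u)) := by
  set W : Fin (n'+1) → Fin (n'+1) → ℝ :=
    fun u v => novNorm ξ (A u v) * Real.exp (-K) with hW
  have hW0 : ∀ u v, 0 ≤ W u v := fun u v =>
    mul_nonneg (novNorm_nonneg (hA u v)) (Real.exp_pos _).le
  have hcyc : ∀ (m : ℕ) (i : Fin (m+1) → Fin (n'+1)), (∏ j, W (i j) (i (j+1))) ≤ 1 := by
    intro m i
    have h1 : (∏ j : Fin (m+1), W (i j) (i (j+1)))
        = (∏ j : Fin (m+1), novNorm ξ (A (i j) (i (j+1)))) * Real.exp (-K) ^ (m+1) := by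
      have hb : (∏ j : Fin (m+1), W (i j) (i (j+1)))
          = ∏ j : Fin (m+1), novNorm ξ (A (i j) (i (j+1))) * Real.exp (-K) := rfl
      rw [hb, Finset.prod_mul_distrib, Finset.prod_const, Finset.card_univ, Fintype.card_fin]
    rw [h1]
    calc (∏ j : Fin (m+1), novNorm ξ (A (i j) (i (j+1)))) * Real.exp (-K) ^ (m+1)
        ≤ Real.exp (K * (m+1)) * Real.exp (-K) ^ (m+1) :=
          mul_le_mul_of_nonneg_right (hreg m i) (pow_nonneg (Real.exp_pos _).le _)
    _ = 1 := by
      rw [← Real.exp_nat_mul, ← Real.exp_add,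
        show K * ((m:ℝ)+1) + ((m+1 : ℕ):ℝ) * (-K) = 0 by push_cast; ring, Real.exp_zero]
  obtain ⟨C, hC1, hCf⟩ := exists_potential hW0 hcyc
  refine ⟨C, hC1, fun u v => ?_⟩
  have hCu : 0 < C u := lt_of_lt_of_le zero_lt_one (hC1 u)
  have hCv : 0 < C v := lt_of_lt_of_le zero_lt_one (hC1 v)
  have h3 : C u * (novNorm ξ (A u v) * Real.exp (-K)) ≤ C v := hCf u v
  have h2 : novNorm ξ (A u v) ≤ Real.exp K * C v / C u := by
    rw [le_div_iff₀ hCu]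
    have hee : Real.exp (-K) * Real.exp K = 1 := by rw [← Real.exp_add]; simp
    have h4 := mul_le_mul_of_nonneg_right h3 (Real.exp_pos K).le
    have h5 : C u * (novNorm ξ (A u v) * Real.exp (-K)) * Real.exp K
        = novNorm ξ (A u v) * C u := by
      calc C u * (novNorm ξ (A u v) * Real.exp (-K)) * Real.exp K
          = novNorm ξ (A u v) * C u * (Real.exp (-K) * Real.exp K) := by ring
      _ = novNorm ξ (A u v) * C u := by rw [hee, mul_one]
    rw [h5] at h4
    calc novNorm ξ (A u v) * C u ≤ C v * Real.exp K := h4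
    _ = Real.exp K * C v := mul_comm _ _
  have hrpos : 0 < Real.exp K * C v / C u := by positivity
  have hdec := DecayBy.of_novNorm_le (hA u v) hrpos h2
  have hlog : Real.log (Real.exp K * C v / C u) = K + Real.log (C v) - Real.log (C u) := by
    rw [Real.log_div (by positivity) hCu.ne', Real.log_mul (Real.exp_pos K).ne' hCv.ne',
      Real.log_exp]
  rwa [hlog] at hdec

lemma decay_A00 (hξ : ∀ a b : G, ξ (a * b) = ξ a + ξ b)
    {n' : ℕ} (A : Fin (n'+1) → Fin (n'+1) → (G → ℤ))
    (hA : ∀ i j, NovCond ξ (A i j)) {K : ℝ}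
    (hreg : ∀ m : ℕ, ∀ i : Fin (m+1) → Fin (n'+1),
      (∏ j : Fin (m+1), novNorm ξ (A (i j) (i (j+1)))) ≤ Real.exp (K * (m+1))) :
    DecayBy ξ (A 0 0) K := by
  have h0 := hreg 0 (fun _ => 0)
  have h0' : novNorm ξ (A 0 0) ≤ Real.exp K := by
    calc novNorm ξ (A 0 0) = ∏ _j : Fin (0+1), novNorm ξ (A 0 0) := by
          rw [Finset.prod_const]
          norm_num
    _ ≤ Real.exp (K * (((0:ℕ):ℝ) + 1)) := h0
    _ = Real.exp K := by norm_num
  have := DecayBy.of_novNorm_le (hA 0 0) (Real.exp_pos K) h0'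
  rwa [Real.log_exp] at this

lemma Aprime_novCond (hξ : ∀ a b : G, ξ (a * b) = ξ a + ξ b)
    {n' : ℕ} (A : Fin (n'+1) → Fin (n'+1) → (G → ℤ))
    (hA : ∀ i j, NovCond ξ (A i j)) {K : ℝ} (hK : K < 0)
    (hreg : ∀ m : ℕ, ∀ i : Fin (m+1) → Fin (n'+1),
      (∏ j : Fin (m+1), novNorm ξ (A (i j) (i (j+1)))) ≤ Real.exp (K * (m+1))) :
    ∀ p q, NovCond ξ (Aprime A p q) := by
  intro p q
  exact (hA _ _).add ((hA _ _).conv hξ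
    ((novCond_Sgeom hξ (hA 0 0) (decay_A00 hξ A hA hreg) hK).conv hξ (hA _ _)))

lemma Aprime_reg (hξ : ∀ a b : G, ξ (a * b) = ξ a + ξ b)
    {n' : ℕ} (A : Fin (n'+1) → Fin (n'+1) → (G → ℤ))
    (hA : ∀ i j, NovCond ξ (A i j)) {K : ℝ} (hK : K < 0)
    (hreg : ∀ m : ℕ, ∀ i : Fin (m+1) → Fin (n'+1),
      (∏ j : Fin (m+1), novNorm ξ (A (i j) (i (j+1)))) ≤ Real.exp (K * (m+1))) :
    ∀ m : ℕ, ∀ i : Fin (m + 1) → Fin n',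
      (∏ j : Fin (m + 1), novNorm ξ (Aprime A (i j) (i (j + 1)))) ≤ Real.exp (K * (m + 1)) := by
  have hdec00 := decay_A00 hξ A hA hreg
  obtain ⟨C, hC1, hCd⟩ := exists_feasible hξ A hA hreg
  have hA'dec : ∀ p q : Fin n', DecayBy ξ (Aprime A p q)
      (K + Real.log (C q.succ) - Real.log (C p.succ)) := by
    intro p q g hg
    have hsplit : A p.succ q.succ g ≠ 0 ∨
        conv (A p.succ 0) (conv (Sgeom (A 0 0)) (A 0 q.succ)) g ≠ 0 := by
      by_contra hc
      push_neg at hc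
      apply hg
      have hrfl : Aprime A p q g
          = A p.succ q.succ g + conv (A p.succ 0) (conv (Sgeom (A 0 0)) (A 0 q.succ)) g := rfl
      rw [hrfl, hc.1, hc.2, add_zero]
    rcases hsplit with h | h
    · exact hCd _ _ g h
    · obtain ⟨h1, ha1, h1'⟩ := conv_ne_zero h
      obtain ⟨h2, hs2, ha2⟩ := conv_ne_zero h1'
      have e1 := hCd p.succ 0 _ ha1
      have e2 : ξ h2 ≤ 0 := decay_Sgeom hξ hdec00 hK _ hs2
      have e3 := hCd 0 q.succ _ ha2
      have s1 : ξ (h1⁻¹ * g) = ξ g - ξ h1 := xi_split hξ h1 g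
      have s2 : ξ (h2⁻¹ * (h1⁻¹ * g)) = ξ (h1⁻¹ * g) - ξ h2 := xi_split hξ h2 _
      linarith
  intro m i
  have hA'nc := Aprime_novCond hξ A hA hK hreg
  calc (∏ j : Fin (m+1), novNorm ξ (Aprime A (i j) (i (j + 1))))
      ≤ ∏ j : Fin (m+1), Real.exp (K + Real.log (C (i (j+1)).succ) - Real.log (C (i j).succ)) :=
        Finset.prod_le_prod (fun j _ => novNorm_nonneg (hA'nc _ _))
          (fun j _ => novNorm_le_exp (hA'dec _ _))
  _ = Real.exp (∑ j : Fin (m+1),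
        (K + Real.log (C (i (j+1)).succ) - Real.log (C (i j).succ))) := (Real.exp_sum _ _).symm
  _ = Real.exp (K * (m + 1)) := by
      congr 1
      have hshift : ∑ j : Fin (m+1), Real.log (C (i (j+1)).succ)
          = ∑ j : Fin (m+1), Real.log (C (i j).succ) := by
        have := Equiv.sum_comp (Equiv.addRight (1 : Fin (m+1)))
          (fun j => Real.log (C (i j).succ))
        simpa using this
      have hsum : ∑ j : Fin (m+1),
          (K + Real.log (C (i (j+1)).succ) - Real.log (C (i j).succ))
          = ((m+1 : ℕ) : ℝ) * K + (∑ j : Fin (m+1), Real.log (C (i (j+1)).succ))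
            - ∑ j : Fin (m+1), Real.log (C (i j).succ) := by
        rw [Finset.sum_sub_distrib, Finset.sum_add_distrib, Finset.sum_const,
          Finset.card_univ, Fintype.card_fin, nsmul_eq_mul]
      rw [hsum, hshift]
      push_cast
      ring

end Part1

section MatrixLayer

variable {G : Type*} [Group G] {ξ : G → ℝ}

/-- all entries satisfy the Novikov condition -/
def NovCondM {G : Type*} [Group G] (ξ : G → ℝ) {n : ℕ}
    (M : Fin n → Fin n → (G → ℤ)) : Prop := ∀ i j, NovCond ξ (M i j)

lemma novCondM_matId {n : ℕ} : NovCondM ξ (matId (n := n) (G := G)) := by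
  intro i j
  unfold matId
  by_cases h : i = j <;> simp [h]
  · exact novCond_oneF
  · exact NovCond.zero

lemma NovCondM.matMulC (hξ : ∀ a b : G, ξ (a * b) = ξ a + ξ b) {n : ℕ}
    {A B : Fin n → Fin n → (G → ℤ)} (hA : NovCondM ξ A) (hB : NovCondM ξ B) :
    NovCondM ξ (matMulC A B) := by
  intro i j
  exact novCond_finsetSum _ _ (fun l _ => (hA i l).conv hξ (hB l j))

lemma matMulC_one_left {n : ℕ} (B : Fin n → Fin n → (G → ℤ)) :
    matMulC matId B = B := by
  funext i j
  unfold matMulC matId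
  rw [Finset.sum_eq_single i]
  · simp [conv_oneF_left]
  · intro b _ hb
    rw [if_neg (fun h => hb h.symm), conv_zero_left]
  · intro h
    exact absurd (Finset.mem_univ i) h

lemma matMulC_one_right {n : ℕ} (A : Fin n → Fin n → (G → ℤ)) :
    matMulC A matId = A := by
  funext i j
  unfold matMulC matId
  rw [Finset.sum_eq_single j]
  · simp [conv_oneF_right]
  · intro b _ hb
    rw [if_neg hb, conv_zero_right]
  · intro h
    exact absurd (Finset.mem_univ j) h

lemma matMulC_assoc (hξ : ∀ a b : G, ξ (a * b) = ξ a + ξ b) {n : ℕ}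
    {A B C : Fin n → Fin n → (G → ℤ)}
    (hA : NovCondM ξ A) (hB : NovCondM ξ B) (hC : NovCondM ξ C) :
    matMulC (matMulC A B) C = matMulC A (matMulC B C) := by
  funext i j
  show ∑ l, conv (∑ k, conv (A i k) (B k l)) (C l j)
      = ∑ k, conv (A i k) (∑ l, conv (B k l) (C l j))
  have lhs : ∀ l, conv (∑ k, conv (A i k) (B k l)) (C l j)
      = ∑ k, conv (conv (A i k) (B k l)) (C l j) := fun l =>
    conv_finsetSum_left hξ _ _ _ (fun k _ => (hA i k).conv hξ (hB k l)) (hC l j)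
  have rhs : ∀ k, conv (A i k) (∑ l, conv (B k l) (C l j))
      = ∑ l, conv (A i k) (conv (B k l) (C l j)) := fun k =>
    conv_finsetSum_right hξ _ _ _ (hA i k) (fun l _ => (hB k l).conv hξ (hC l j))
  simp only [lhs, rhs]
  rw [Finset.sum_comm]
  exact Finset.sum_congr rfl (fun l _ => Finset.sum_congr rfl (fun k _ =>
    conv_assoc hξ (hA i l) (hB l k) (hC k j)))

/-- product of a list of matrices -/
def matProd {G : Type*} [Group G] {n : ℕ} (L : List (Fin n → Fin n → (G → ℤ))) :
    Fin n → Fin n → (G → ℤ) := L.foldr matMulC matId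

lemma novCondM_matProd (hξ : ∀ a b : G, ξ (a * b) = ξ a + ξ b) {n : ℕ}
    (L : List (Fin n → Fin n → (G → ℤ))) (hL : ∀ E ∈ L, NovCondM ξ E) :
    NovCondM ξ (matProd L) := by
  induction L with
  | nil => exact novCondM_matId
  | cons E L ih =>
    exact ((hL E (List.mem_cons_self)).matMulC hξ
      (ih (fun E' hE' => hL E' (List.mem_cons_of_mem _ hE'))) : _)

lemma matProd_cons {n : ℕ} (E : Fin n → Fin n → (G → ℤ)) (L) :
    matProd (E :: L) = matMulC E (matProd L) := rfl

lemma matProd_append (hξ : ∀ a b : G, ξ (a * b) = ξ a + ξ b) {n : ℕ}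
    (L₁ L₂ : List (Fin n → Fin n → (G → ℤ)))
    (h1 : ∀ E ∈ L₁, NovCondM ξ E) (h2 : ∀ E ∈ L₂, NovCondM ξ E) :
    matProd (L₁ ++ L₂) = matMulC (matProd L₁) (matProd L₂) := by
  induction L₁ with
  | nil => simp [matProd, matMulC_one_left]
  | cons E L₁ ih =>
    have hE := h1 E (List.mem_cons_self)
    have hL₁ : ∀ E' ∈ L₁, NovCondM ξ E' := fun E' hE' => h1 E' (List.mem_cons_of_mem _ hE')
    show matMulC E (matProd (L₁ ++ L₂)) = matMulC (matMulC E (matProd L₁)) (matProd L₂)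
    rw [ih hL₁, matMulC_assoc hξ hE (novCondM_matProd hξ L₁ hL₁) (novCondM_matProd hξ L₂ h2)]

/-- embed an n×n matrix as the lower-right block with 1 in the corner -/
def liftB {G : Type*} [Group G] {n : ℕ} (M : Fin n → Fin n → (G → ℤ)) :
    Fin (n+1) → Fin (n+1) → (G → ℤ) :=
  Fin.cons (Fin.cons oneF (fun _ => 0)) (fun i' => Fin.cons 0 (fun j' => M i' j'))

lemma liftB_zero_zero {n : ℕ} (M : Fin n → Fin n → (G → ℤ)) : liftB M 0 0 = oneF := by
  simp [liftB]

lemma liftB_zero_succ {n : ℕ} (M : Fin n → Fin n → (G → ℤ)) (j : Fin n) :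
    liftB M 0 j.succ = 0 := by simp [liftB]

lemma liftB_succ_zero {n : ℕ} (M : Fin n → Fin n → (G → ℤ)) (i : Fin n) :
    liftB M i.succ 0 = 0 := by simp [liftB]

lemma liftB_succ_succ {n : ℕ} (M : Fin n → Fin n → (G → ℤ)) (i j : Fin n) :
    liftB M i.succ j.succ = M i j := by simp [liftB]

lemma liftB_matId {n : ℕ} : liftB (matId (n := n) (G := G)) = matId := by
  funext i j
  refine Fin.cases ?_ (fun i' => ?_) i <;> refine Fin.cases ?_ (fun j' => ?_) j
  · rw [liftB_zero_zero]; simp [matId]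
  · rw [liftB_zero_succ]; simp [matId, (Fin.succ_ne_zero _).symm]
  · rw [liftB_succ_zero]; simp [matId, Fin.succ_ne_zero]
  · rw [liftB_succ_succ]
    unfold matId
    by_cases h : i' = j'
    · simp [h]
    · rw [if_neg h, if_neg (by simpa [Fin.succ_inj] using h)]

lemma liftB_mul {n : ℕ} (E M : Fin n → Fin n → (G → ℤ)) :
    matMulC (liftB E) (liftB M) = liftB (matMulC E M) := by
  funext i j
  show ∑ l, conv (liftB E i l) (liftB M l j) = liftB (matMulC E M) i j
  rw [Fin.sum_univ_succ]
  refine Fin.cases ?_ (fun i' => ?_) i <;> refine Fin.cases ?_ (fun j' => ?_) j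
  · rw [liftB_zero_zero, liftB_zero_zero, liftB_zero_zero, conv_oneF_left]
    have : ∀ l : Fin n, conv (liftB E 0 l.succ) (liftB M l.succ 0) = 0 := fun l => by
      rw [liftB_zero_succ, conv_zero_left]
    simp [this]
  · rw [liftB_zero_zero, liftB_zero_succ, liftB_zero_succ, conv_oneF_left]
    have : ∀ l : Fin n, conv (liftB E 0 l.succ) (liftB M l.succ j'.succ) = 0 := fun l => by
      rw [liftB_zero_succ, conv_zero_left]
    simp [this]
  · rw [liftB_succ_zero, liftB_zero_zero, liftB_succ_zero, conv_zero_left]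
    have : ∀ l : Fin n, conv (liftB E i'.succ l.succ) (liftB M l.succ 0) = 0 := fun l => by
      rw [liftB_succ_zero, conv_zero_right]
    simp [this]
  · rw [liftB_succ_zero, liftB_succ_succ, conv_zero_left]
    have : ∀ l : Fin n, conv (liftB E i'.succ l.succ) (liftB M l.succ j'.succ)
        = conv (E i' l) (M l j') := fun l => by rw [liftB_succ_succ, liftB_succ_succ]
    simp only [this, zero_add]
    rfl

lemma matProd_liftList {n : ℕ} (L : List (Fin n → Fin n → (G → ℤ))) :
    matProd (L.map liftB) = liftB (matProd L) := by
  induction L with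
  | nil => exact liftB_matId.symm
  | cons E L ih =>
    show matMulC (liftB E) (matProd (L.map liftB)) = _
    rw [ih, liftB_mul]
    rfl

/-- elementary matrix -/
def elemM {G : Type*} [Group G] {n : ℕ} (i j : Fin n) (c : G → ℤ) :
    Fin n → Fin n → (G → ℤ) :=
  fun k l => if k = l then oneF else if k = i ∧ l = j then c else 0

lemma isElemM_elemM {n : ℕ} {i j : Fin n} (hij : i ≠ j) {c : G → ℤ} (hc : NovCond ξ c) :
    IsElemM ξ (elemM i j c) := ⟨i, j, hij, c, hc, rfl⟩

lemma novCondM_elemM {n : ℕ} {i j : Fin n} {c : G → ℤ} (hc : NovCond ξ c) :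
    NovCondM ξ (elemM i j c) := by
  intro k l
  unfold elemM
  by_cases h1 : k = l
  · simp [h1, novCond_oneF]
  · rw [if_neg h1]
    by_cases h2 : k = i ∧ l = j
    · simpa [h2] using hc
    · simp [h2, NovCond.zero]

lemma elemM_mul (hξ : ∀ a b : G, ξ (a * b) = ξ a + ξ b) {n : ℕ}
    (a b : Fin n) (hab : a ≠ b) (x : G → ℤ) (M : Fin n → Fin n → (G → ℤ)) :
    matMulC (elemM a b x) M = fun k l =>
      if k = a then M a l + conv x (M b l) else M k l := by
  funext k l
  show ∑ m, conv (elemM a b x k m) (M m l) = _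
  by_cases hk : k = a
  · rw [if_pos hk]
    have hterm : ∀ m, conv (elemM a b x k m) (M m l)
        = (if m = a then M a l else 0) + (if m = b then conv x (M b l) else 0) := by
      intro m
      unfold elemM
      by_cases h1 : m = a
      · subst h1
        rw [if_pos hk, conv_oneF_left, if_pos rfl, if_neg hab, add_zero]
      · rw [if_neg (fun h : k = m => h1 (h.symm.trans hk))]
        by_cases h2 : m = b
        · subst h2
          rw [if_pos ⟨hk, rfl⟩, if_pos rfl, if_neg h1, zero_add]
        · rw [if_neg (fun h => h2 h.2), conv_zero_left, if_neg h1, if_neg h2, add_zero]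
    simp only [hterm]
    rw [Finset.sum_add_distrib, Finset.sum_ite_eq', Finset.sum_ite_eq']
    simp
  · rw [if_neg hk]
    have hterm : ∀ m, conv (elemM a b x k m) (M m l) = if m = k then M k l else 0 := by
      intro m
      unfold elemM
      by_cases h1 : k = m
      · subst h1
        rw [if_pos rfl, conv_oneF_left, if_pos rfl]
      · rw [if_neg h1, if_neg (fun h => hk h.1), conv_zero_left, if_neg (fun h => h1 h.symm)]
    simp only [hterm]
    rw [Finset.sum_ite_eq']
    simp

end MatrixLayer

section Factor

variable {G : Type*} [Group G] {ξ : G → ℝ}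

lemma novCond_trivUnit (γ : G) (e : ℤ) : NovCond ξ (fun g => if g = γ then e else 0) := by
  intro r
  apply Set.Finite.subset (Set.finite_singleton γ)
  intro g hg
  rcases hg with ⟨h1, _⟩
  simp only [Set.mem_singleton_iff]
  by_contra hne
  simp [hne] at h1

lemma novCondM_of_pred {n : ℕ} {E : Fin n → Fin n → (G → ℤ)}
    (h : IsElemM ξ E ∨ IsTrivDiag ξ E ∨ IsWDiag ξ E) : NovCondM ξ E := by
  rcases h with ⟨i, j, hij, c, hc, rfl⟩ | ⟨γ, e, he, rfl⟩ | ⟨a, ha, rfl⟩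
  · exact novCondM_elemM hc
  · intro k l
    show NovCond ξ (if k = l then (fun g => if g = γ k then e k else 0) else 0)
    by_cases h : k = l
    · rw [if_pos h]; exact novCond_trivUnit _ _
    · rw [if_neg h]; exact NovCond.zero
  · intro k l
    show NovCond ξ (if k = l then oneF - a k else 0)
    by_cases h : k = l
    · rw [if_pos h]; exact novCond_oneF.sub (ha k).1
    · rw [if_neg h]; exact NovCond.zero

lemma liftB_elemM {n : ℕ} (i j : Fin n) (c : G → ℤ) :
    liftB (elemM i j c) = elemM i.succ j.succ c := by
  funext k l
  refine Fin.cases ?_ (fun k' => ?_) k <;> refine Fin.cases ?_ (fun l' => ?_) l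
  · rw [liftB_zero_zero]
    unfold elemM
    rw [if_pos rfl]
  · rw [liftB_zero_succ]
    unfold elemM
    rw [if_neg (Fin.succ_ne_zero l').symm,
      if_neg (fun h => (Fin.succ_ne_zero i).symm h.1)]
  · rw [liftB_succ_zero]
    unfold elemM
    rw [if_neg (Fin.succ_ne_zero k'),
      if_neg (fun h => (Fin.succ_ne_zero j).symm h.2)]
  · rw [liftB_succ_succ]
    unfold elemM
    by_cases h1 : k' = l'
    · rw [if_pos h1, if_pos (by rw [h1])]
    · rw [if_neg h1, if_neg (fun h => h1 (Fin.succ_inj.mp h))]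
      by_cases h2 : k' = i ∧ l' = j
      · rw [if_pos h2, if_pos ⟨by rw [h2.1], by rw [h2.2]⟩]
      · rw [if_neg h2, if_neg (fun h => h2 ⟨Fin.succ_inj.mp h.1, Fin.succ_inj.mp h.2⟩)]

lemma isElemM_liftB {n : ℕ} {E : Fin n → Fin n → (G → ℤ)} (h : IsElemM ξ E) :
    IsElemM ξ (liftB E) := by
  obtain ⟨i, j, hij, c, hc, rfl⟩ := h
  have : liftB (G := G) (fun k l => if k = l then oneF else if k = i ∧ l = j then c else 0)
      = elemM i.succ j.succ c := liftB_elemM i j c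
  rw [this]
  exact isElemM_elemM (by simpa [Fin.succ_inj] using hij) hc

lemma isTrivDiag_liftB {n : ℕ} {E : Fin n → Fin n → (G → ℤ)} (h : IsTrivDiag ξ E) :
    IsTrivDiag ξ (liftB E) := by
  obtain ⟨γ, e, he, rfl⟩ := h
  refine ⟨Fin.cons 1 γ, Fin.cons 1 e, ?_, ?_⟩
  · intro i
    refine Fin.cases ?_ (fun i' => ?_) i
    · left; simp
    · simpa using he i'
  · funext k l
    refine Fin.cases ?_ (fun k' => ?_) k <;> refine Fin.cases ?_ (fun l' => ?_) l
    · rw [liftB_zero_zero]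
      simp only [if_pos rfl, Fin.cons_zero]
      funext g
      simp [oneF]
    · rw [liftB_zero_succ]
      rw [if_neg (Fin.succ_ne_zero l').symm]
    · rw [liftB_succ_zero]
      rw [if_neg (Fin.succ_ne_zero k')]
    · rw [liftB_succ_succ]
      by_cases h1 : k' = l'
      · rw [if_pos h1, if_pos (by rw [h1])]
        simp
      · rw [if_neg h1, if_neg (fun h => h1 (Fin.succ_inj.mp h))]

lemma isWDiag_liftB {n : ℕ} {E : Fin n → Fin n → (G → ℤ)} (h : IsWDiag ξ E) :
    IsWDiag ξ (liftB E) := by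
  obtain ⟨a, ha, rfl⟩ := h
  refine ⟨Fin.cons 0 a, ?_, ?_⟩
  · intro i
    refine Fin.cases ?_ (fun i' => ?_) i
    · simp only [Fin.cons_zero]
      exact ⟨NovCond.zero, by rw [novNorm_zero]; norm_num⟩
    · simpa using ha i'
  · funext k l
    refine Fin.cases ?_ (fun k' => ?_) k <;> refine Fin.cases ?_ (fun l' => ?_) l
    · rw [liftB_zero_zero]
      simp
    · rw [liftB_zero_succ]
      rw [if_neg (Fin.succ_ne_zero l').symm]
    · rw [liftB_succ_zero]
      rw [if_neg (Fin.succ_ne_zero k')]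
    · rw [liftB_succ_succ]
      by_cases h1 : k' = l'
      · rw [if_pos h1, if_pos (by rw [h1])]
        simp
      · rw [if_neg h1, if_neg (fun h => h1 (Fin.succ_inj.mp h))]

/-- closed form for a product of column transvections -/
def colForm {G : Type*} [Group G] {n' : ℕ} (s : List (Fin n')) (c : Fin n' → (G → ℤ)) :
    Fin (n'+1) → Fin (n'+1) → (G → ℤ) :=
  fun k l => if k = l then oneF
    else if l = 0 then (Fin.cases 0 (fun k' => if k' ∈ s then c k' else 0) k) else 0

lemma colForm_zero_row {n' : ℕ} (s : List (Fin n')) (c : Fin n' → (G → ℤ)) (l : Fin (n'+1)) :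
    colForm s c 0 l = if (0 : Fin (n'+1)) = l then oneF else 0 := by
  unfold colForm
  by_cases h : (0 : Fin (n'+1)) = l
  · rw [if_pos h, if_pos h]
  · rw [if_neg h, if_neg h, if_neg (fun hl : l = 0 => h hl.symm)]

lemma colForm_succ_row {n' : ℕ} (s : List (Fin n')) (c : Fin n' → (G → ℤ))
    (k' : Fin n') (l : Fin (n'+1)) :
    colForm s c k'.succ l = if k'.succ = l then oneF
      else if l = 0 then (if k' ∈ s then c k' else 0) else 0 := by
  unfold colForm
  by_cases h : k'.succ = l
  · rw [if_pos h, if_pos h]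
  · rw [if_neg h, if_neg h]
    by_cases h2 : l = 0
    · rw [if_pos h2, if_pos h2, Fin.cases_succ]
    · rw [if_neg h2, if_neg h2]

lemma colProd (hξ : ∀ a b : G, ξ (a * b) = ξ a + ξ b) {n' : ℕ} (c : Fin n' → (G → ℤ)) :
    ∀ lst : List (Fin n'), lst.Nodup →
      matProd (lst.map (fun i' => elemM i'.succ 0 (c i'))) = colForm lst c := by
  intro lst
  induction lst with
  | nil =>
    intro _
    funext k l
    show matId k l = _
    unfold matId colForm
    by_cases h : k = l
    · rw [if_pos h, if_pos h]
    · rw [if_neg h, if_neg h]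
      by_cases h2 : l = 0
      · rw [if_pos h2]
        refine Fin.cases ?_ (fun k' => ?_) k
        · rw [Fin.cases_zero]
        · rw [Fin.cases_succ, if_neg (List.not_mem_nil (a := k'))]
      · rw [if_neg h2]
  | cons i₀ t ih =>
    intro hnd
    have hi₀ : i₀ ∉ t := (List.nodup_cons.1 hnd).1
    have hndt := (List.nodup_cons.1 hnd).2
    show matMulC (elemM i₀.succ 0 (c i₀)) (matProd (t.map (fun i' => elemM i'.succ 0 (c i')))) = _
    rw [ih hndt, elemM_mul hξ _ _ (Fin.succ_ne_zero i₀) _ _]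
    funext k l
    beta_reduce
    by_cases hk : k = i₀.succ
    · rw [if_pos hk, hk]
      rw [colForm_zero_row]
      rw [colForm_succ_row, colForm_succ_row, if_neg hi₀]
      by_cases hl0 : l = 0
      · rw [hl0]
        rw [if_neg (Fin.succ_ne_zero i₀), if_pos rfl, if_neg (Fin.succ_ne_zero i₀),
          if_pos rfl, if_pos rfl, conv_oneF_right]
        rw [if_pos (List.mem_cons_self (a := i₀) (l := t)), zero_add]
      · by_cases hl : i₀.succ = l
        · rw [if_pos hl, if_pos hl, if_neg (fun h : (0:Fin (n'+1)) = l => hl0 (h.symm)),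
            conv_zero_right, add_zero]
        · rw [if_neg hl, if_neg hl, if_neg hl0, if_neg hl0,
            if_neg (fun h : (0:Fin (n'+1)) = l => hl0 h.symm), conv_zero_right, add_zero]
    · rw [if_neg hk]
      rcases Fin.eq_zero_or_eq_succ k with rfl | ⟨k', rfl⟩
      · rw [colForm_zero_row, colForm_zero_row]
      · rw [colForm_succ_row, colForm_succ_row]
        have hk' : k' ≠ i₀ := fun h => hk (by rw [h])
        by_cases h1 : k'.succ = l
        · rw [if_pos h1, if_pos h1]
        · rw [if_neg h1, if_neg h1]
          by_cases h2 : l = 0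
          · rw [if_pos h2, if_pos h2]
            by_cases hm : k' ∈ t
            · rw [if_pos hm, if_pos (List.mem_cons_of_mem _ hm)]
            · rw [if_neg hm, if_neg (fun hmem =>
                (List.mem_cons.mp hmem).elim (fun h => hk' h) hm)]
          · rw [if_neg h2, if_neg h2]

/-- closed form for a product of row transvections -/
def rowForm {G : Type*} [Group G] {n' : ℕ} (s : List (Fin n')) (c : Fin n' → (G → ℤ)) :
    Fin (n'+1) → Fin (n'+1) → (G → ℤ) :=
  fun k l => if k = l then oneF
    else if k = 0 then (Fin.cases 0 (fun l' => if l' ∈ s then c l' else 0) l) else 0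

lemma rowForm_succ_row {n' : ℕ} (s : List (Fin n')) (c : Fin n' → (G → ℤ))
    (k' : Fin n') (l : Fin (n'+1)) :
    rowForm s c k'.succ l = if k'.succ = l then oneF else 0 := by
  unfold rowForm
  by_cases h : k'.succ = l
  · rw [if_pos h, if_pos h]
  · rw [if_neg h, if_neg h, if_neg (Fin.succ_ne_zero k')]

lemma rowForm_zero_row {n' : ℕ} (s : List (Fin n')) (c : Fin n' → (G → ℤ)) (l : Fin (n'+1)) :
    rowForm s c 0 l = if (0 : Fin (n'+1)) = l then oneF
      else (Fin.cases 0 (fun l' => if l' ∈ s then c l' else 0) l) := by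
  unfold rowForm
  by_cases h : (0 : Fin (n'+1)) = l
  · rw [if_pos h, if_pos h]
  · rw [if_neg h, if_neg h, if_pos rfl]

lemma rowProd (hξ : ∀ a b : G, ξ (a * b) = ξ a + ξ b) {n' : ℕ} (c : Fin n' → (G → ℤ)) :
    ∀ lst : List (Fin n'), lst.Nodup →
      matProd (lst.map (fun j' => elemM 0 j'.succ (c j'))) = rowForm lst c := by
  intro lst
  induction lst with
  | nil =>
    intro _
    funext k l
    show matId k l = _
    unfold matId rowForm
    by_cases h : k = l
    · rw [if_pos h, if_pos h]
    · rw [if_neg h, if_neg h]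
      by_cases h2 : k = 0
      · rw [if_pos h2]
        refine Fin.cases ?_ (fun l' => ?_) l
        · rw [Fin.cases_zero]
        · rw [Fin.cases_succ, if_neg (List.not_mem_nil (a := l'))]
      · rw [if_neg h2]
  | cons j₀ t ih =>
    intro hnd
    have hj₀ : j₀ ∉ t := (List.nodup_cons.1 hnd).1
    have hndt := (List.nodup_cons.1 hnd).2
    show matMulC (elemM 0 j₀.succ (c j₀)) (matProd (t.map (fun j' => elemM 0 j'.succ (c j')))) = _
    rw [ih hndt, elemM_mul hξ _ _ (Fin.succ_ne_zero j₀).symm _ _]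
    funext k l
    beta_reduce
    by_cases hk : k = 0
    · rw [if_pos hk, hk]
      rw [rowForm_zero_row, rowForm_succ_row, rowForm_zero_row]
      refine Fin.cases ?_ (fun l' => ?_) l
      · rw [if_pos rfl, if_pos rfl, if_neg (Fin.succ_ne_zero j₀), conv_zero_right, add_zero]
      · rw [Fin.cases_succ, Fin.cases_succ,
          if_neg ((Fin.succ_ne_zero l').symm : (0:Fin (n'+1)) ≠ l'.succ),
          if_neg ((Fin.succ_ne_zero l').symm : (0:Fin (n'+1)) ≠ l'.succ)]
        by_cases h1 : l' = j₀
        · rw [h1, if_pos rfl, if_neg hj₀, if_pos (List.mem_cons_self (a := j₀) (l := t)), conv_oneF_right,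
            zero_add]
        · rw [if_neg (fun h => h1 (Fin.succ_inj.mp h).symm), conv_zero_right, add_zero]
          by_cases hm : l' ∈ t
          · rw [if_pos hm, if_pos (List.mem_cons_of_mem _ hm)]
          · rw [if_neg hm, if_neg (fun hmem =>
              (List.mem_cons.mp hmem).elim (fun h => h1 h) hm)]
    · rw [if_neg hk]
      rcases Fin.eq_zero_or_eq_succ k with rfl | ⟨k', rfl⟩
      · exact absurd rfl hk
      · rw [rowForm_succ_row, rowForm_succ_row]

end Factor

section FinalIdentity

variable {G : Type*} [Group G] {ξ : G → ℝ}

/-- diagonal matrix of units `1 - aᵢ` -/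
def wDiagM {G : Type*} [Group G] {n : ℕ} (a : Fin n → (G → ℤ)) :
    Fin n → Fin n → (G → ℤ) :=
  fun k l => if k = l then oneF - a k else 0

lemma matId_succ_succ {n : ℕ} (k' l' : Fin n) :
    (matId (G := G) : Fin (n+1) → Fin (n+1) → (G → ℤ)) k'.succ l'.succ = matId k' l' := by
  unfold matId
  by_cases h : k' = l'
  · rw [if_pos h, if_pos (by rw [h])]
  · rw [if_neg h, if_neg (fun hh => h (Fin.succ_inj.mp hh))]

lemma wDiagM_cons_zero {n : ℕ} (a0 : G → ℤ) (rest : Fin n → (G → ℤ)) (m : Fin (n+1)) :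
    wDiagM (Fin.cons a0 rest) 0 m = if (0 : Fin (n+1)) = m then oneF - a0 else 0 := by
  unfold wDiagM
  by_cases h : (0 : Fin (n+1)) = m
  · rw [if_pos h, if_pos h, Fin.cons_zero]
  · rw [if_neg h, if_neg h]

lemma wDiagM_cons_succ {n : ℕ} (a0 : G → ℤ) (k' : Fin n) (m : Fin (n+1)) :
    wDiagM (Fin.cons a0 (fun _ => (0 : G → ℤ))) k'.succ m
      = if k'.succ = m then oneF else 0 := by
  unfold wDiagM
  by_cases h : k'.succ = m
  · rw [if_pos h, if_pos h, Fin.cons_succ, sub_zero]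
  · rw [if_neg h, if_neg h]

lemma final_identity (hξ : ∀ a b : G, ξ (a * b) = ξ a + ξ b)
    {n' : ℕ} (A : Fin (n'+1) → Fin (n'+1) → (G → ℤ))
    (hA : ∀ i j, NovCond ξ (A i j)) {K : ℝ} (hK : K < 0)
    (hdec00 : DecayBy ξ (A 0 0) K) :
    matMulC (colForm (List.finRange n') (fun i' => -(conv (A i'.succ 0) (Sgeom (A 0 0)))))
      (matMulC (wDiagM (Fin.cons (A 0 0) (fun _ => (0 : G → ℤ))))
        (matMulC (liftB (matId - Aprime A))
          (rowForm (List.finRange n') (fun j' => -(conv (Sgeom (A 0 0)) (A 0 j'.succ))))))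
    = matId - A := by
  have hSnc : NovCond ξ (Sgeom (A 0 0)) := novCond_Sgeom hξ (hA 0 0) hdec00 hK
  have hunc : NovCond ξ (oneF - A 0 0) := novCond_oneF.sub (hA 0 0)
  have huS : conv (oneF - A 0 0) (Sgeom (A 0 0)) = oneF :=
    conv_oneSub_Sgeom hξ (hA 0 0) hdec00 hK
  have hSu : conv (Sgeom (A 0 0)) (oneF - A 0 0) = oneF :=
    conv_Sgeom_oneSub hξ (hA 0 0) hdec00 hK
  set M3 := rowForm (List.finRange n') (fun j' => -(conv (Sgeom (A 0 0)) (A 0 j'.succ)))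
    with hM3
  set M1 := colForm (List.finRange n') (fun i' => -(conv (A i'.succ 0) (Sgeom (A 0 0))))
    with hM1
  set P := liftB (matId - Aprime A) with hP
  set wD := wDiagM (Fin.cons (A 0 0) (fun _ => (0 : G → ℤ))) with hwD
  -- entries of M3
  have hM3_succ : ∀ (k' : Fin n') (l : Fin (n'+1)),
      M3 k'.succ l = if k'.succ = l then oneF else 0 := fun k' l => by
    rw [hM3, rowForm_succ_row]
  have hM3_00 : M3 0 0 = oneF := by
    rw [hM3, rowForm_zero_row, if_pos rfl]
  have hM3_0succ : ∀ l' : Fin n', M3 0 l'.succ = -(conv (Sgeom (A 0 0)) (A 0 l'.succ)) :=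
    fun l' => by
    rw [hM3, rowForm_zero_row, if_neg (Fin.succ_ne_zero l').symm, Fin.cases_succ,
      if_pos (List.mem_finRange l')]
  -- entries of M1
  have hM1_zero : ∀ l, M1 0 l = if (0 : Fin (n'+1)) = l then oneF else 0 := fun l => by
    rw [hM1, colForm_zero_row]
  have hM1_succ : ∀ (k' : Fin n') (l : Fin (n'+1)),
      M1 k'.succ l = if k'.succ = l then oneF
        else if l = 0 then -(conv (A k'.succ 0) (Sgeom (A 0 0))) else 0 := fun k' l => by
    rw [hM1, colForm_succ_row, if_pos (List.mem_finRange k')]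
  -- Q3 = P * M3
  set Q3 := matMulC P M3 with hQ3
  have hQ3_zero : ∀ l, Q3 0 l = M3 0 l := by
    intro l
    rw [hQ3]
    show (∑ m, conv (P 0 m) (M3 m l)) = M3 0 l
    rw [Fin.sum_univ_succ, hP, liftB_zero_zero, conv_oneF_left]
    have hz : ∀ m' : Fin n',
        conv (liftB (matId - Aprime A) 0 m'.succ) (M3 m'.succ l) = 0 := fun m' => by
      rw [liftB_zero_succ, conv_zero_left]
    simp only [hz]
    rw [Finset.sum_const_zero, add_zero]
  have hQ3_succ_zero : ∀ k' : Fin n', Q3 k'.succ 0 = 0 := by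
    intro k'
    rw [hQ3]
    show (∑ m, conv (P k'.succ m) (M3 m 0)) = 0
    rw [Fin.sum_univ_succ, hP, liftB_succ_zero, conv_zero_left]
    have hz : ∀ m' : Fin n',
        conv (liftB (matId - Aprime A) k'.succ m'.succ) (M3 m'.succ 0) = 0 := fun m' => by
      rw [hM3_succ m' 0, if_neg (Fin.succ_ne_zero m'), conv_zero_right]
    simp only [hz]
    rw [Finset.sum_const_zero, add_zero]
  have hQ3_succ_succ : ∀ (k' l' : Fin n'),
      Q3 k'.succ l'.succ = ((matId - Aprime A : Fin n' → Fin n' → (G → ℤ))) k' l' := by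
    intro k' l'
    rw [hQ3]
    show (∑ m, conv (P k'.succ m) (M3 m l'.succ)) = _
    rw [Fin.sum_univ_succ, hP, liftB_succ_zero, conv_zero_left, zero_add]
    rw [Finset.sum_eq_single l']
    · rw [liftB_succ_succ, hM3_succ, if_pos rfl, conv_oneF_right]
    · intro b _ hb
      rw [hM3_succ, if_neg (fun h => hb (Fin.succ_inj.mp h)), conv_zero_right]
    · intro h; exact absurd (Finset.mem_univ l') h
  -- Q2 = wD * Q3
  set Q2 := matMulC wD Q3 with hQ2
  have hQ2_zero : ∀ l, Q2 0 l = conv (oneF - A 0 0) (M3 0 l) := by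
    intro l
    rw [hQ2]
    show (∑ m, conv (wD 0 m) (Q3 m l)) = _
    rw [Fin.sum_univ_succ]
    rw [hwD, wDiagM_cons_zero, if_pos rfl]
    have hz : ∀ m' : Fin n',
        conv (wDiagM (Fin.cons (A 0 0) (fun _ => (0:G→ℤ))) 0 m'.succ) (Q3 m'.succ l) = 0 :=
      fun m' => by
      rw [wDiagM_cons_zero, if_neg (Fin.succ_ne_zero m').symm, conv_zero_left]
    simp only [hz]
    rw [Finset.sum_const_zero, add_zero, hQ3_zero]
  have hQ2_succ : ∀ (k' : Fin n') l, Q2 k'.succ l = Q3 k'.succ l := by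
    intro k' l
    rw [hQ2]
    show (∑ m, conv (wD k'.succ m) (Q3 m l)) = _
    rw [Fin.sum_univ_succ]
    rw [hwD, wDiagM_cons_succ, if_neg (Fin.succ_ne_zero k'), conv_zero_left, zero_add]
    rw [Finset.sum_eq_single k']
    · rw [wDiagM_cons_succ, if_pos rfl, conv_oneF_left]
    · intro b _ hb
      rw [wDiagM_cons_succ, if_neg (fun h => hb (Fin.succ_inj.mp h).symm), conv_zero_left]
    · intro h; exact absurd (Finset.mem_univ k') h
  have hQ2_00 : Q2 0 0 = oneF - A 0 0 := by
    rw [hQ2_zero, hM3_00, conv_oneF_right]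
  have hQ2_0succ : ∀ l' : Fin n', Q2 0 l'.succ = -(A 0 l'.succ) := by
    intro l'
    rw [hQ2_zero, hM3_0succ, conv_neg_right, ← conv_assoc hξ hunc hSnc (hA 0 l'.succ),
      huS, conv_oneF_left]
  -- final product
  funext k l
  show (∑ m, conv (M1 k m) (Q2 m l))
      = ((matId - A : Fin (n'+1) → Fin (n'+1) → (G → ℤ))) k l
  have hsub : ∀ (k0 l0 : Fin (n'+1)),
      ((matId - A : Fin (n'+1) → Fin (n'+1) → (G → ℤ))) k0 l0 = matId k0 l0 - A k0 l0 :=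
    fun _ _ => rfl
  rcases Fin.eq_zero_or_eq_succ k with rfl | ⟨k', rfl⟩
  · -- row 0
    rw [Fin.sum_univ_succ, hM1_zero, if_pos rfl, conv_oneF_left]
    have hz : ∀ m' : Fin n', conv (M1 0 m'.succ) (Q2 m'.succ l) = 0 := fun m' => by
      rw [hM1_zero, if_neg (Fin.succ_ne_zero m').symm, conv_zero_left]
    simp only [hz]
    rw [Finset.sum_const_zero, add_zero]
    rcases Fin.eq_zero_or_eq_succ l with rfl | ⟨l', rfl⟩
    · rw [hQ2_00, hsub]
      unfold matId
      rw [if_pos rfl]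
    · rw [hQ2_0succ, hsub]
      unfold matId
      rw [if_neg (Fin.succ_ne_zero l').symm, zero_sub]
  · -- row k'.succ
    rw [Fin.sum_univ_succ]
    have hfirst : conv (M1 k'.succ 0) (Q2 0 l)
        = conv (-(conv (A k'.succ 0) (Sgeom (A 0 0)))) (Q2 0 l) := by
      rw [hM1_succ, if_neg (Fin.succ_ne_zero k'), if_pos rfl]
    have hrest : (∑ m' : Fin n', conv (M1 k'.succ m'.succ) (Q2 m'.succ l))
        = Q3 k'.succ l := by
      rw [Finset.sum_eq_single k']
      · rw [hM1_succ, if_pos rfl, conv_oneF_left, hQ2_succ]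
      · intro b _ hb
        rw [hM1_succ, if_neg (fun h => hb (Fin.succ_inj.mp h).symm),
          if_neg (Fin.succ_ne_zero b), conv_zero_left]
      · intro h; exact absurd (Finset.mem_univ k') h
    rw [hfirst, hrest]
    rcases Fin.eq_zero_or_eq_succ l with rfl | ⟨l', rfl⟩
    · rw [hQ2_00, hQ3_succ_zero, add_zero, conv_neg_left,
        conv_assoc hξ (hA k'.succ 0) hSnc hunc, hSu, conv_oneF_right, hsub]
      unfold matId
      rw [if_neg (Fin.succ_ne_zero k'), zero_sub]
    · rw [hQ2_0succ, hQ3_succ_succ, conv_neg_left, conv_neg_right, neg_neg,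
        conv_assoc hξ (hA k'.succ 0) hSnc (hA 0 l'.succ)]
      have hApr : ((matId - Aprime A : Fin n' → Fin n' → (G → ℤ))) k' l'
          = matId k' l' - (A k'.succ l'.succ
            + conv (A k'.succ 0) (conv (Sgeom (A 0 0)) (A 0 l'.succ))) := rfl
      rw [hApr, hsub, matId_succ_succ]
      abel

end FinalIdentity

section Main

variable {G : Type*} [Group G] {ξ : G → ℝ}

lemma main_factor (hξ : ∀ a b : G, ξ (a * b) = ξ a + ξ b) :
    ∀ (n : ℕ) (A : Fin n → Fin n → (G → ℤ)), (∀ i j, NovCond ξ (A i j)) →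
    ∀ K : ℝ, K < 0 →
    (∀ m : ℕ, ∀ i : Fin (m + 1) → Fin n,
      (∏ j : Fin (m + 1), novNorm ξ (A (i j) (i (j + 1)))) ≤ Real.exp (K * (m + 1))) →
    ∃ L : List (Fin n → Fin n → (G → ℤ)),
      (∀ E ∈ L, IsElemM ξ E ∨ IsTrivDiag ξ E ∨ IsWDiag ξ E) ∧
      matProd L = matId - A := by
  intro n
  induction n with
  | zero =>
    intro A _ K _ _
    refine ⟨[], by simp, ?_⟩
    funext i
    exact i.elim0
  | succ n' ih =>
    intro A hA K hK hreg
    have hdec00 : DecayBy ξ (A 0 0) K := decay_A00 hξ A hA hreg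
    have hSnc : NovCond ξ (Sgeom (A 0 0)) := novCond_Sgeom hξ (hA 0 0) hdec00 hK
    obtain ⟨L', hL'pred, hL'prod⟩ := ih (Aprime A) (Aprime_novCond hξ A hA hK hreg) K hK
      (Aprime_reg hξ A hA hK hreg)
    have hcLnc : ∀ i' : Fin n', NovCond ξ (-(conv (A i'.succ 0) (Sgeom (A 0 0)))) :=
      fun i' => ((hA _ _).conv hξ hSnc).neg
    have hcRnc : ∀ j' : Fin n', NovCond ξ (-(conv (Sgeom (A 0 0)) (A 0 j'.succ))) :=
      fun j' => (hSnc.conv hξ (hA _ _)).neg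
    have hwDpred : IsWDiag ξ (wDiagM (Fin.cons (A 0 0) (fun _ : Fin n' => (0 : G → ℤ)))) := by
      refine ⟨Fin.cons (A 0 0) (fun _ : Fin n' => 0), ?_, rfl⟩
      intro i
      refine Fin.cases ?_ (fun i' => ?_) i
      · rw [Fin.cons_zero]
        refine ⟨hA 0 0, ?_⟩
        have h1 : novNorm ξ (A 0 0) ≤ Real.exp K := novNorm_le_exp hdec00
        have h2 : Real.exp K < 1 := by
          rw [← Real.exp_zero]
          exact Real.exp_lt_exp.mpr hK
        linarith
      · rw [Fin.cons_succ]
        exact ⟨NovCond.zero, by rw [novNorm_zero]; norm_num⟩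
    refine ⟨((List.finRange n').map (fun i' => elemM (G := G) i'.succ 0
        (-(conv (A i'.succ 0) (Sgeom (A 0 0))))))
      ++ (wDiagM (Fin.cons (A 0 0) (fun _ : Fin n' => (0 : G → ℤ)))
        :: (L'.map liftB ++ (List.finRange n').map (fun j' => elemM (G := G) 0 j'.succ
          (-(conv (Sgeom (A 0 0)) (A 0 j'.succ)))))), ?_, ?_⟩
    · intro E hE
      rcases List.mem_append.mp hE with h | h
      · obtain ⟨i', _, rfl⟩ := List.mem_map.mp h
        exact Or.inl (isElemM_elemM (Fin.succ_ne_zero i') (hcLnc i'))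
      · rcases List.mem_cons.mp h with rfl | h
        · exact Or.inr (Or.inr hwDpred)
        · rcases List.mem_append.mp h with h | h
          · obtain ⟨E', hE', rfl⟩ := List.mem_map.mp h
            rcases hL'pred E' hE' with hp | hp | hp
            · exact Or.inl (isElemM_liftB hp)
            · exact Or.inr (Or.inl (isTrivDiag_liftB hp))
            · exact Or.inr (Or.inr (isWDiag_liftB hp))
          · obtain ⟨j', _, rfl⟩ := List.mem_map.mp h
            exact Or.inl (isElemM_elemM (Fin.succ_ne_zero j').symm (hcRnc j'))
    · -- the product computation
      have hL1nc : ∀ E ∈ (List.finRange n').map (fun i' => elemM (G := G) i'.succ 0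
          (-(conv (A i'.succ 0) (Sgeom (A 0 0))))), NovCondM ξ E := by
        intro E hE
        obtain ⟨i', _, rfl⟩ := List.mem_map.mp hE
        exact novCondM_elemM (hcLnc i')
      have hL4nc : ∀ E ∈ (List.finRange n').map (fun j' => elemM (G := G) 0 j'.succ
          (-(conv (Sgeom (A 0 0)) (A 0 j'.succ)))), NovCondM ξ E := by
        intro E hE
        obtain ⟨j', _, rfl⟩ := List.mem_map.mp hE
        exact novCondM_elemM (hcRnc j')
      have hLiftnc : ∀ E ∈ L'.map liftB, NovCondM ξ E := by
        intro E hE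
        obtain ⟨E', hE', rfl⟩ := List.mem_map.mp hE
        apply novCondM_of_pred
        rcases hL'pred E' hE' with hp | hp | hp
        · exact Or.inl (isElemM_liftB hp)
        · exact Or.inr (Or.inl (isTrivDiag_liftB hp))
        · exact Or.inr (Or.inr (isWDiag_liftB hp))
      have hrestnc : ∀ E ∈ (wDiagM (Fin.cons (A 0 0) (fun _ : Fin n' => (0 : G → ℤ)))
          :: (L'.map liftB ++ (List.finRange n').map (fun j' => elemM (G := G) 0 j'.succ
            (-(conv (Sgeom (A 0 0)) (A 0 j'.succ)))))), NovCondM ξ E := by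
        intro E hE
        rcases List.mem_cons.mp hE with rfl | hE'
        · exact novCondM_of_pred (Or.inr (Or.inr hwDpred))
        · rcases List.mem_append.mp hE' with h | h
          · exact hLiftnc E h
          · exact hL4nc E h
      rw [matProd_append hξ _ _ hL1nc hrestnc, matProd_cons,
        matProd_append hξ _ _ hLiftnc hL4nc, matProd_liftList, hL'prod,
        colProd hξ _ (List.finRange n') (List.nodup_finRange n'),
        rowProd hξ _ (List.finRange n') (List.nodup_finRange n')]
      exact final_identity hξ A hA hK hdec00

end Main


/-- Elementary row reduction of `I - A`, for `A` a `ξ`-regular `(n'+1)×(n'+1)`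
matrix with constant `K`, produces a lower right block `I - A'` with
`A'_{ij} = A_{i+1,j+1} + A_{i+1,0} (1 - A_{00})⁻¹ A_{0,j+1}` again `ξ`-regular
with the same constant `K`.  Consequently (by induction) the class of `I - A`
in `K̄₁^G(ẐG_ξ)` lies in the subgroup `W̄`: the matrix `I - A` is a product of
elementary matrices, trivial-unit diagonal matrices, and diagonal matrices with
entries `1 - a`, `‖a‖ < 1`. -/
theorem xiRegular_row_reduction_and_Wbar
    {G : Type*} [Group G] (ξ : G → ℝ)
    (hξ : ∀ a b : G, ξ (a * b) = ξ a + ξ b)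
    {n' : ℕ} (A : Fin (n' + 1) → Fin (n' + 1) → (G → ℤ))
    (hA : ∀ i j, NovCond ξ (A i j))
    (K : ℝ) (hK : K < 0)
    (hreg : ∀ m : ℕ, ∀ i : Fin (m + 1) → Fin (n' + 1),
      (∏ j : Fin (m + 1), novNorm ξ (A (i j) (i (j + 1)))) ≤
        Real.exp (K * (m + 1))) :
    (∀ m : ℕ, ∀ i : Fin (m + 1) → Fin n',
      (∏ j : Fin (m + 1), novNorm ξ
        ((fun p q : Fin n' => A p.succ q.succ +
            conv (A p.succ 0)
              (conv (fun g => ∑ᶠ k : ℕ, convPow (A 0 0) k g) (A 0 q.succ)))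
          (i j) (i (j + 1)))) ≤ Real.exp (K * (m + 1))) ∧
    (∃ L : List (Fin (n' + 1) → Fin (n' + 1) → (G → ℤ)),
      (∀ E ∈ L, IsElemM ξ E ∨ IsTrivDiag ξ E ∨ IsWDiag ξ E) ∧
      L.foldr matMulC matId = matId - A) := by
  
  constructor
  · exact Aprime_reg hξ A hA hK hreg
  · obtain ⟨L, h1, h2⟩ := main_factor hξ (n' + 1) A hA K hK hreg
    exact ⟨L, h1, h2⟩
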